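/- arXiv:2112.05948 — 14 statements merged into one kernel-verified Lean document; each statement's English description precedes it below -/
import Mathlib

section
/- Let c > 0 and y > 0, and set M = ((c^2)*y*(4*c*y^2 + 3*sqrt(3)*sqrt(8*c*y^2+27) + 27))^(1/3) (real cube root of a positive number). Then the number x = (2^(1/3))*M/(6*c) + (4^(1/3))*c*y^2/(3*M) - 2*y/3 is positive and satisfies y - 2*c*x*(x+y)^2 = 0; hence it equals the unique positive solution R_c(y) of the first-order condition. -/
/-- The explicit closed-form expression (via the real cube root of a positive
number) is positive, satisfies the first-order condition
`y - 2*c*x*(x+y)^2 = 0`, and hence equals the unique positive solution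
`R_c(y)`. -/
theorem closed_form_best_response (c y : ℝ) (hc : 0 < c) (hy : 0 < y) (M x : ℝ)
    (hM : M = (c ^ 2 * y * (4 * c * y ^ 2 +
        3 * Real.sqrt 3 * Real.sqrt (8 * c * y ^ 2 + 27) + 27)) ^ ((1 : ℝ) / 3))
    (hx : x = (2 : ℝ) ^ ((1 : ℝ) / 3) * M / (6 * c)
        + (4 : ℝ) ^ ((1 : ℝ) / 3) * c * y ^ 2 / (3 * M) - 2 * y / 3) :
    (0 < x ∧ y - 2 * c * x * (x + y) ^ 2 = 0) ∧
    ∀ x' : ℝ, 0 < x' → y - 2 * c * x' * (x' + y) ^ 2 = 0 → x' = x := by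
  set s : ℝ := Real.sqrt 3 with hs
  set r : ℝ := Real.sqrt (8 * c * y ^ 2 + 27) with hr
  set t : ℝ := (2 : ℝ) ^ ((1 : ℝ) / 3) with ht
  set u : ℝ := (4 : ℝ) ^ ((1 : ℝ) / 3) with hu
  have hs2 : s ^ 2 = 3 := Real.sq_sqrt (by norm_num)
  have hr2 : r ^ 2 = 8 * c * y ^ 2 + 27 :=
    Real.sq_sqrt (by positivity)
  have hsr : (s * r) ^ 2 = 24 * c * y ^ 2 + 81 := by
    rw [mul_pow, hs2, hr2]; ring
  have hsnn : 0 ≤ s := Real.sqrt_nonneg _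
  have hrnn : 0 ≤ r := Real.sqrt_nonneg _
  have hApos : 0 < c ^ 2 * y * (4 * c * y ^ 2 + 3 * s * r + 27) := by
    have h1 : 0 < 4 * c * y ^ 2 + 3 * s * r + 27 := by positivity
    positivity
  have hMpos : 0 < M := by
    rw [hM]; exact Real.rpow_pos_of_pos hApos _
  have hMne : M ≠ 0 := ne_of_gt hMpos
  have hcne : c ≠ 0 := ne_of_gt hc
  have hM3 : M ^ 3 = c ^ 2 * y * (4 * c * y ^ 2 + 3 * s * r + 27) := by
    rw [hM, ← Real.rpow_natCast _ 3, ← Real.rpow_mul hApos.le]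
    norm_num
  have ht3 : t ^ 3 = 2 := by
    rw [ht, ← Real.rpow_natCast _ 3, ← Real.rpow_mul (by norm_num : (0:ℝ) ≤ 2)]
    norm_num
  have hu3 : u ^ 3 = 4 := by
    rw [hu, ← Real.rpow_natCast _ 3, ← Real.rpow_mul (by norm_num : (0:ℝ) ≤ 4)]
    norm_num
  have htu : t * u = 2 := by
    rw [ht, hu, ← Real.mul_rpow (by norm_num) (by norm_num)]
    have h8 : (2 : ℝ) * 4 = (2 : ℝ) ^ (3 : ℕ) := by norm_num
    rw [h8, ← Real.rpow_natCast (2:ℝ) 3, ← Real.rpow_mul (by norm_num : (0:ℝ) ≤ 2)]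
    norm_num
  -- key polynomial identity eliminating the radicals
  have key : M ^ 6 + 16 * c ^ 6 * y ^ 6 = 2 * c ^ 2 * M ^ 3 * y * (4 * c * y ^ 2 + 27) := by
    linear_combination (M ^ 3 + c ^ 2 * y * (4 * c * y ^ 2 + 3 * s * r + 27)
      - 2 * c ^ 2 * y * (4 * c * y ^ 2 + 27)) * hM3 + 9 * c ^ 4 * y ^ 2 * hsr
  set a : ℝ := t * M / (6 * c) with ha
  set b : ℝ := u * c * y ^ 2 / (3 * M) with hb
  have hab : a * b = y ^ 2 / 9 := by
    rw [ha, hb]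
    field_simp
    linear_combination 9 * htu
  have hsum : 54 * c * (a ^ 3 + b ^ 3) = y * (4 * c * y ^ 2 + 27) := by
    rw [ha, hb]
    field_simp
    linear_combination 1458 * M ^ 6 * ht3 + 11664 * c ^ 6 * y ^ 6 * hu3 +
      2916 * key
  have hxab : x = a + b - 2 * y / 3 := by rw [hx, ha, hb]
  have heq : y - 2 * c * x * (x + y) ^ 2 = 0 := by
    rw [hxab]
    linear_combination (-1/27 : ℝ) * hsum + (-6 * c * (a + b)) * hab
  have hxpos : 0 < x := by
    by_contra h
    push_neg at h
    nlinarith [sq_nonneg (x + y), mul_nonneg hc.le (sq_nonneg (x + y))]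
  refine ⟨⟨hxpos, heq⟩, ?_⟩
  intro x' hx' heq'
  have h0 : 2 * c * ((x' - x) * (x' ^ 2 + x' * x + x ^ 2 + 2 * y * (x' + x) + y ^ 2)) = 0 := by
    linear_combination heq - heq'
  have hB : 0 < x' ^ 2 + x' * x + x ^ 2 + 2 * y * (x' + x) + y ^ 2 := by positivity
  have h2 : (x' - x) * (x' ^ 2 + x' * x + x ^ 2 + 2 * y * (x' + x) + y ^ 2) = 0 := by
    have h2c : (2 : ℝ) * c ≠ 0 := by positivity
    exact (mul_eq_zero.mp h0).resolve_left h2c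
  have := (mul_eq_zero.mp h2).resolve_right (ne_of_gt hB)
  linarith
end

section
/- For all c1, c2 > 0, the system q2 = 2*c1*q1*(q1+q2)^2, q1 = 2*c2*q2*(q1+q2)^2 with q1 > 0, q2 > 0 has exactly one solution, namely q1* = sqrt(c2) / ((sqrt(c1)+sqrt(c2)) * sqrt(2*sqrt(c1*c2))) and q2* = sqrt(c1) / ((sqrt(c1)+sqrt(c2)) * sqrt(2*sqrt(c1*c2))). -/
set_option maxHeartbeats 2000000

private lemma sq_eq_one_of_pos {x : ℝ} (hx : 0 < x) (h : x ^ 2 = 1) : x = 1 := by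
  nlinarith

/-- The simultaneous first-order conditions of the two firms with quadratic
costs and isoelastic demand have exactly one positive solution, given by the
stated closed-form expressions. -/
theorem unique_positive_equilibrium (c1 c2 : ℝ) (hc1 : 0 < c1) (hc2 : 0 < c2) :
    ∀ q1 q2 : ℝ,
      (0 < q1 ∧ 0 < q2 ∧ q2 = 2 * c1 * q1 * (q1 + q2) ^ 2 ∧
        q1 = 2 * c2 * q2 * (q1 + q2) ^ 2) ↔
      (q1 = Real.sqrt c2 /
          ((Real.sqrt c1 + Real.sqrt c2) * Real.sqrt (2 * Real.sqrt (c1 * c2))) ∧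
       q2 = Real.sqrt c1 /
          ((Real.sqrt c1 + Real.sqrt c2) * Real.sqrt (2 * Real.sqrt (c1 * c2)))) := by
  set s1 := Real.sqrt c1 with hs1def
  set s2 := Real.sqrt c2 with hs2def
  set D := Real.sqrt (2 * Real.sqrt (c1 * c2)) with hDdef
  have hs1 : 0 < s1 := Real.sqrt_pos.mpr hc1
  have hs2 : 0 < s2 := Real.sqrt_pos.mpr hc2
  have hs1sq : s1 ^ 2 = c1 := Real.sq_sqrt hc1.le
  have hs2sq : s2 ^ 2 = c2 := Real.sq_sqrt hc2.le
  have hsmul : Real.sqrt (c1 * c2) = s1 * s2 := Real.sqrt_mul hc1.le c2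
  have hD : 0 < D := Real.sqrt_pos.mpr (by positivity)
  have hDsq : D ^ 2 = 2 * (s1 * s2) := by
    rw [hDdef, Real.sq_sqrt (by positivity), hsmul]
  have hs12 : 0 < s1 + s2 := by linarith
  intro q1 q2
  constructor
  · rintro ⟨hq1, hq2, h1, h2⟩
    have hS : 0 < q1 + q2 := by linarith
    -- c1 q1^2 = c2 q2^2
    have hc : c1 * q1 ^ 2 = c2 * q2 ^ 2 := by
      have e1 : q1 * q2 = 2 * c1 * q1 ^ 2 * (q1 + q2) ^ 2 := by linear_combination q1 * h1
      have e2 : q1 * q2 = 2 * c2 * q2 ^ 2 * (q1 + q2) ^ 2 := by linear_combination q2 * h2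
      have := e1.symm.trans e2
      have hS2 : (0:ℝ) < (q1 + q2) ^ 2 := by positivity
      nlinarith [this]
    -- s1 q1 = s2 q2
    have hsq : s1 * q1 = s2 * q2 := by
      have h : (s1 * q1) ^ 2 = (s2 * q2) ^ 2 := by
        rw [mul_pow, mul_pow, hs1sq, hs2sq]; exact hc
      have h1' : 0 < s1 * q1 := by positivity
      have h2' : 0 < s2 * q2 := by positivity
      nlinarith [h]
    -- 2 s1 s2 S^2 = 1
    have hprod : 2 * (s1 * s2) * (q1 + q2) ^ 2 = 1 := by
      have e : q1 * q2 = 4 * (c1 * c2) * (q1 * q2) * ((q1 + q2) ^ 2) ^ 2 := by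
        linear_combination q1 * h1 + (2*c1*q1*(q1+q2)^2) * h2
      have hq12 : 0 < q1 * q2 := by positivity
      have e2 : 4 * (c1 * c2) * ((q1 + q2) ^ 2) ^ 2 = 1 := by
        have := mul_left_cancel₀ (ne_of_gt hq12) (by nlinarith [e] : q1 * q2 * 1 = q1 * q2 * (4 * (c1 * c2) * ((q1 + q2) ^ 2) ^ 2))
        linarith [this]
      have key : (2 * (s1 * s2) * (q1 + q2) ^ 2) ^ 2 = 1 := by
        have : c1 * c2 = (s1 * s2) ^ 2 := by rw [mul_pow, hs1sq, hs2sq]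
        linear_combination e2 - (4*((q1+q2)^2)^2)*this
      have hpos : 0 < 2 * (s1 * s2) * (q1 + q2) ^ 2 := by positivity
      exact sq_eq_one_of_pos hpos key
    -- D * S = 1
    have hDS : D * (q1 + q2) = 1 := by
      have key : (D * (q1 + q2)) ^ 2 = 1 := by
        rw [mul_pow, hDsq]; linear_combination hprod
      have hpos : 0 < D * (q1 + q2) := by positivity
      exact sq_eq_one_of_pos hpos key
    constructor
    · rw [eq_div_iff (by positivity)]
      linear_combination D*hsq + s2*hDS
    · rw [eq_div_iff (by positivity)]
      linear_combination (-D)*hsq + s1*hDS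
  · rintro ⟨e1, e2⟩
    have hq1 : 0 < q1 := by rw [e1]; exact div_pos hs2 (mul_pos hs12 hD)
    have hq2 : 0 < q2 := by rw [e2]; exact div_pos hs1 (mul_pos hs12 hD)
    have hden : (s1 + s2) * D ≠ 0 := ne_of_gt (mul_pos hs12 hD)
    refine ⟨hq1, hq2, ?_, ?_⟩
    · rw [e1, e2, ← add_div]
      field_simp
      linear_combination s1 * (s1 + s2) ^ 2 * hDsq + 2 * s2 * (s1 + s2) ^ 2 * hs1sq
    · rw [e1, e2, ← add_div]
      field_simp
      linear_combination s2 * (s1 + s2) ^ 2 * hDsq + 2 * s1 * (s1 + s2) ^ 2 * hs2sq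
end

section
/- (Model LL) For all c1, c2 > 0, the map T(q1,q2) = (S1(q1,q2), S2(q2,q1)), where S_i(x,y) = (2x+y)/(2*(1+c_i*(x+y)^2)), has exactly one fixed point (q1*,q2*) with q1* > 0 and q2* > 0; moreover this fixed point is locally stable for all feasible parameter values: the Jacobian matrix J of T at (q1*,q2*) satisfies Jury's conditions 1 + tr(J) + det(J) > 0, 1 - tr(J) + det(J) > 0, and 1 - det(J) > 0. -/
/-- The LMA (local monopolistic approximation) reaction map with own output `x`
and rival output `y`, for a firm with quadratic cost coefficient `c`. -/
noncomputable def S (c x y : ℝ) : ℝ := (2 * x + y) / (2 * (1 + c * (x + y) ^ 2))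

lemma denom_pos (c x y : ℝ) (hc : 0 < c) : 0 < 2 * (1 + c * (x + y) ^ 2) := by positivity

/-- fixed point characterization -/
lemma fixed_iff (c x y : ℝ) (hc : 0 < c) :
    x = S c x y ↔ 2 * c * (x + y) ^ 2 * x = y := by
  have hd := (denom_pos c x y hc).ne'
  rw [S, eq_div_iff hd]
  constructor <;> intro h <;> linear_combination h

lemma hasDerivAt_S_own (c y x : ℝ) (hc : 0 < c) :
    HasDerivAt (fun t => S c t y)
      ((2 * (2 * (1 + c * (x + y) ^ 2)) - (2 * x + y) * (4 * c * (x + y))) /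
        (2 * (1 + c * (x + y) ^ 2)) ^ 2) x := by
  have hN : HasDerivAt (fun t : ℝ => 2 * t + y) 2 x := by
    simpa using ((hasDerivAt_id x).const_mul 2).add_const y
  have hD : HasDerivAt (fun t : ℝ => 2 * (1 + c * (t + y) ^ 2)) (4 * c * (x + y)) x := by
    have h1 := ((((hasDerivAt_id x).add_const y).pow 2).const_mul c).const_add 1
    have h2 := h1.const_mul 2
    exact h2.congr_deriv (by simp; ring)
  exact hN.div hD (denom_pos c x y hc).ne'

lemma hasDerivAt_S_rival (c x y : ℝ) (hc : 0 < c) :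
    HasDerivAt (fun t => S c x t)
      ((1 * (2 * (1 + c * (x + y) ^ 2)) - (2 * x + y) * (4 * c * (x + y))) /
        (2 * (1 + c * (x + y) ^ 2)) ^ 2) y := by
  have hN : HasDerivAt (fun t : ℝ => 2 * x + t) 1 y := by
    simpa using (hasDerivAt_id y).const_add (2 * x)
  have hD : HasDerivAt (fun t : ℝ => 2 * (1 + c * (x + t) ^ 2)) (4 * c * (x + y)) y := by
    have h1 := ((((hasDerivAt_id y).const_add x).pow 2).const_mul c).const_add 1
    have h2 := h1.const_mul 2
    exact h2.congr_deriv (by simp; ring)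
  exact hN.div hD (denom_pos c x y hc).ne'

set_option maxHeartbeats 1000000
/-- Model LL: the map `T(q1,q2) = (S1(q1,q2), S2(q2,q1))` has exactly one
positive fixed point, and at that fixed point the Jacobian matrix satisfies
Jury's stability conditions. -/
theorem modelLL_unique_stable (c1 c2 : ℝ) (hc1 : 0 < c1) (hc2 : 0 < c2) :
    (∃! p : ℝ × ℝ, 0 < p.1 ∧ 0 < p.2 ∧
      p.1 = S c1 p.1 p.2 ∧ p.2 = S c2 p.2 p.1) ∧
    (∀ q1 q2 : ℝ, 0 < q1 → 0 < q2 →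
      q1 = S c1 q1 q2 → q2 = S c2 q2 q1 →
      ∀ J : Matrix (Fin 2) (Fin 2) ℝ,
        J = !![deriv (fun x => S c1 x q2) q1, deriv (fun y => S c1 q1 y) q2;
               deriv (fun y => S c2 q2 y) q1, deriv (fun x => S c2 x q1) q2] →
        1 + Matrix.trace J + Matrix.det J > 0 ∧
        1 - Matrix.trace J + Matrix.det J > 0 ∧
        1 - Matrix.det J > 0) := by
  constructor
  · -- uniqueness of the positive fixed point
    have hcc : (0:ℝ) < c1 * c2 := mul_pos hc1 hc2
    set t : ℝ := Real.sqrt (c1 * c2) with htdef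
    have htpos : 0 < t := Real.sqrt_pos.mpr hcc
    have ht2 : t ^ 2 = c1 * c2 := Real.sq_sqrt hcc.le
    set σ : ℝ := Real.sqrt (1 / (2 * t)) with hσdef
    have hσpos : 0 < σ := Real.sqrt_pos.mpr (by positivity)
    have hσ2 : σ ^ 2 = 1 / (2 * t) := by
      rw [hσdef, sq, Real.mul_self_sqrt (by positivity)]
    have hσ4 : 4 * c1 * c2 * σ ^ 4 = 1 := by
      have h1 : σ ^ 4 = (1 / (2 * t)) ^ 2 := by rw [← hσ2]; ring
      rw [h1]
      field_simp
      linear_combination (-4) * ht2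
    have hden1 : 0 < 1 + 2 * c1 * σ ^ 2 := by
      have := mul_nonneg hc1.le (sq_nonneg σ)
      linarith
    set x0 : ℝ := σ / (1 + 2 * c1 * σ ^ 2) with hx0def
    have hx0pos : 0 < x0 := div_pos hσpos hden1
    have hx0 : x0 * (1 + 2 * c1 * σ ^ 2) = σ := by
      rw [hx0def]; field_simp
    set y0 : ℝ := 2 * c1 * σ ^ 2 * x0 with hy0def
    have hy0pos : 0 < y0 := by
      have h2c : (0:ℝ) < 2 * c1 := by linarith
      exact mul_pos (mul_pos h2c (pow_pos hσpos 2)) hx0pos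
    have hsum0 : x0 + y0 = σ := by rw [hy0def]; linarith [hx0]
    refine ⟨⟨x0, y0⟩, ⟨hx0pos, hy0pos, ?_, ?_⟩, ?_⟩
    · show x0 = S c1 x0 y0
      rw [fixed_iff _ _ _ hc1, hsum0]
      all_goals exact hy0def.symm
    · show y0 = S c2 y0 x0
      rw [fixed_iff _ _ _ hc2]
      have hsum0' : y0 + x0 = σ := by linarith
      rw [hsum0']
      all_goals linear_combination x0 * hσ4 + (2 * c2 * σ ^ 2) * hy0def
    · rintro ⟨x, y⟩ ⟨hx, hy, hf1, hf2⟩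
      dsimp only at hx hy hf1 hf2
      rw [fixed_iff _ _ _ hc1] at hf1
      rw [fixed_iff _ _ _ hc2] at hf2
      have hspos : 0 < x + y := by linarith
      have hkey : 4 * c1 * c2 * (x + y) ^ 4 = 1 := by
        have h3 : (4 * c1 * c2 * (x + y) ^ 4) * x = 1 * x := by
          linear_combination (2 * c2 * (x + y) ^ 2) * hf1 + hf2
        exact mul_right_cancel₀ hx.ne' h3
      have hs4 : (x + y) ^ 4 = σ ^ 4 := by
        have h4 : (4 * c1 * c2) * (x + y) ^ 4 = (4 * c1 * c2) * σ ^ 4 := by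
          linear_combination hkey - hσ4
        exact mul_left_cancel₀ (by positivity) h4
      have hs : x + y = σ := by
        have h5 : (x + y) ^ 2 = σ ^ 2 := by
          have hfac : ((x + y) ^ 2 - σ ^ 2) * ((x + y) ^ 2 + σ ^ 2) = 0 := by
            linear_combination hs4
          rcases mul_eq_zero.mp hfac with h | h
          · linarith
          · nlinarith [pow_pos hspos 2, pow_pos hσpos 2]
        have hfac : (x + y - σ) * (x + y + σ) = 0 := by linear_combination h5
        rcases mul_eq_zero.mp hfac with h | h
        · linarith
        · linarith
      have hyval : y = 2 * c1 * σ ^ 2 * x := by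
        rw [← hs]; linarith [hf1]
      have hxeq : x * (1 + 2 * c1 * σ ^ 2) = σ := by
        rw [← hs]; linear_combination hf1
      have hxval : x = x0 := by
        rw [hx0def, eq_div_iff hden1.ne']
        exact hxeq
      have hyval2 : y = y0 := by rw [hyval, hxval, hy0def]
      exact Prod.ext hxval hyval2
  · -- stability
    intro q1 q2 hq1 hq2 hf1 hf2 J hJ
    rw [fixed_iff _ _ _ hc1] at hf1
    rw [fixed_iff _ _ _ hc2] at hf2
    have hspos : 0 < q1 + q2 := by linarith
    have hA0 : (0:ℝ) < c1 * (q1 + q2) ^ 2 := by positivity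
    have hB0 : (0:ℝ) < c2 * (q1 + q2) ^ 2 := by positivity
    have hApos : (0:ℝ) < 1 + c1 * (q1 + q2) ^ 2 := by linarith
    have hBpos : (0:ℝ) < 1 + c2 * (q1 + q2) ^ 2 := by linarith
    have ha : deriv (fun x => S c1 x q2) q1 =
        q1 / ((q1 + q2) * (1 + c1 * (q1 + q2) ^ 2)) := by
      rw [(hasDerivAt_S_own c1 q2 q1 hc1).deriv,
        div_eq_div_iff (by positivity) (by positivity)]
      linear_combination (-4 * (1 + c1 * (q1 + q2) ^ 2)) * hf1
    have hb : deriv (fun y => S c1 q1 y) q2 =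
        (q1 - q2) / (2 * ((q1 + q2) * (1 + c1 * (q1 + q2) ^ 2))) := by
      rw [(hasDerivAt_S_rival c1 q1 q2 hc1).deriv,
        div_eq_div_iff (by positivity) (by positivity)]
      linear_combination (-8 * (1 + c1 * (q1 + q2) ^ 2)) * hf1
    have hcent : deriv (fun y => S c2 q2 y) q1 =
        (q2 - q1) / (2 * ((q1 + q2) * (1 + c2 * (q1 + q2) ^ 2))) := by
      rw [(hasDerivAt_S_rival c2 q2 q1 hc2).deriv,
        div_eq_div_iff (by positivity) (by positivity)]
      linear_combination (-8 * (1 + c2 * (q1 + q2) ^ 2)) * hf2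
    have hd : deriv (fun x => S c2 x q1) q2 =
        q2 / ((q1 + q2) * (1 + c2 * (q1 + q2) ^ 2)) := by
      rw [(hasDerivAt_S_own c2 q1 q2 hc2).deriv,
        div_eq_div_iff (by positivity) (by positivity)]
      linear_combination (-4 * (1 + c2 * (q1 + q2) ^ 2)) * hf2
    rw [hJ, ha, hb, hcent, hd, Matrix.trace_fin_two_of, Matrix.det_fin_two_of]
    have hdet : q1 / ((q1 + q2) * (1 + c1 * (q1 + q2) ^ 2)) *
          (q2 / ((q1 + q2) * (1 + c2 * (q1 + q2) ^ 2))) -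
        (q1 - q2) / (2 * ((q1 + q2) * (1 + c1 * (q1 + q2) ^ 2))) *
          ((q2 - q1) / (2 * ((q1 + q2) * (1 + c2 * (q1 + q2) ^ 2)))) =
        1 / (4 * (1 + c1 * (q1 + q2) ^ 2) * (1 + c2 * (q1 + q2) ^ 2)) := by
      rw [div_mul_div_comm, div_mul_div_comm, div_sub_div _ _ (by positivity) (by positivity),
        div_eq_div_iff (by positivity) (by positivity)]
      ring
    rw [hdet]
    have hdetpos : 0 < 1 / (4 * (1 + c1 * (q1 + q2) ^ 2) * (1 + c2 * (q1 + q2) ^ 2)) := by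
      positivity
    have hdetlt : 1 / (4 * (1 + c1 * (q1 + q2) ^ 2) * (1 + c2 * (q1 + q2) ^ 2)) < 1 := by
      rw [div_lt_one (by positivity)]
      nlinarith [mul_pos hA0 hB0]
    have h1 : q1 / ((q1 + q2) * (1 + c1 * (q1 + q2) ^ 2)) < q1 / (q1 + q2) :=
      div_lt_div_of_pos_left hq1 hspos (by nlinarith [mul_pos hspos hA0])
    have h2 : q2 / ((q1 + q2) * (1 + c2 * (q1 + q2) ^ 2)) < q2 / (q1 + q2) :=
      div_lt_div_of_pos_left hq2 hspos (by nlinarith [mul_pos hspos hB0])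
    have h3 : q1 / (q1 + q2) + q2 / (q1 + q2) = 1 := by
      rw [← add_div, div_self hspos.ne']
    have htrpos : 0 < q1 / ((q1 + q2) * (1 + c1 * (q1 + q2) ^ 2)) +
        q2 / ((q1 + q2) * (1 + c2 * (q1 + q2) ^ 2)) := by positivity
    refine ⟨by linarith, by linarith, by linarith⟩
end

section
/- (Model LB) For all c1, c2 > 0, the system q1 = S1(q1,q2), q1 = 2*c2*q2*(q1+q2)^2 with q1, q2 > 0 has exactly one solution (q1*,q2*); moreover the Jacobian matrix J = [[dS1/dq1, dS1/dq2],[R2'(q1*), 0]] evaluated at (q1*,q2*), where R2'(q1) = -(4*c2*q1*q2 + 4*c2*q2^2 - 1)/(2*c2*(q1^2 + 4*q1*q2 + 3*q2^2)), satisfies Jury's conditions 1 + tr(J) + det(J) > 0, 1 - tr(J) + det(J) > 0, and 1 - det(J) > 0; i.e., the unique positive equilibrium of Model LB is locally stable for all feasible parameter values. -/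
set_option maxHeartbeats 1000000 in
/-- Model LB: the equilibrium system `q1 = S1(q1,q2)`,
`q1 = 2*c2*q2*(q1+q2)^2` has exactly one positive solution, and at that
solution the Jacobian matrix satisfies Jury's stability conditions. -/
theorem modelLB_unique_stable (c1 c2 : ℝ) (hc1 : 0 < c1) (hc2 : 0 < c2) :
    (∃! p : ℝ × ℝ, 0 < p.1 ∧ 0 < p.2 ∧
      p.1 = S c1 p.1 p.2 ∧ p.1 = 2 * c2 * p.2 * (p.1 + p.2) ^ 2) ∧
    (∀ q1 q2 : ℝ, 0 < q1 → 0 < q2 →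
      q1 = S c1 q1 q2 → q1 = 2 * c2 * q2 * (q1 + q2) ^ 2 →
      ∀ J : Matrix (Fin 2) (Fin 2) ℝ,
        J = !![deriv (fun x => S c1 x q2) q1, deriv (fun y => S c1 q1 y) q2;
               -(4 * c2 * q1 * q2 + 4 * c2 * q2 ^ 2 - 1) /
                 (2 * c2 * (q1 ^ 2 + 4 * q1 * q2 + 3 * q2 ^ 2)), 0] →
        1 + Matrix.trace J + Matrix.det J > 0 ∧
        1 - Matrix.trace J + Matrix.det J > 0 ∧
        1 - Matrix.det J > 0) := by
  have hkey : ∀ x N D : ℝ, x * D = N → 0 < N → 0 < D → 0 < x := by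
    intro x N D h hN hD
    have hx : x = N / D := by rw [eq_div_iff hD.ne']; exact h
    rw [hx]; exact div_pos hN hD
  constructor
  · -- existence and uniqueness
    set s : ℝ := Real.sqrt (c1 * c2) with hs_def
    have hs : 0 < s := Real.sqrt_pos.2 (by positivity)
    have hs2 : s ^ 2 = c1 * c2 := Real.sq_sqrt (by positivity)
    set t : ℝ := c1 / s with ht_def
    have ht : 0 < t := div_pos hc1 hs
    have h1t : (0:ℝ) < 1 + t := by linarith
    set Q : ℝ := 1 / Real.sqrt (2 * s) with hQ_def
    have hQ : 0 < Q := by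
      rw [hQ_def]
      exact div_pos one_pos (Real.sqrt_pos.2 (by positivity))
    have hQ2 : Q ^ 2 = 1 / (2 * s) := by
      rw [hQ_def, div_pow, one_pow, Real.sq_sqrt (by positivity)]
    have hc1' : c1 = t * s := by rw [ht_def]; field_simp
    have hc2' : c2 = s / t := by
      rw [ht_def]
      rw [eq_div_iff (by positivity)]
      field_simp
      linear_combination -hs2
    have h2c1Q : 2 * c1 * Q ^ 2 = t := by
      rw [hc1', hQ2]; field_simp
    have hq1pos : 0 < Q / (1 + t) := div_pos hQ h1t
    have hq2pos : 0 < t * Q / (1 + t) := div_pos (mul_pos ht hQ) h1t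
    have hQe : Q / (1 + t) + t * Q / (1 + t) = Q := by field_simp
    refine ⟨(Q / (1 + t), t * Q / (1 + t)), ⟨hq1pos, hq2pos, ?_, ?_⟩, ?_⟩
    · -- q1 = S c1 q1 q2
      show Q / (1 + t) = S c1 (Q / (1 + t)) (t * Q / (1 + t))
      rw [S, hQe]
      rw [eq_div_iff (by positivity)]
      have hcq : c1 * Q ^ 2 = t / 2 := by linear_combination h2c1Q / 2
      rw [hcq]
      field_simp
    · -- q1 = 2 c2 q2 (q1+q2)^2
      show Q / (1 + t) = 2 * c2 * (t * Q / (1 + t)) * (Q / (1 + t) + t * Q / (1 + t)) ^ 2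
      rw [hQe, hc2', hQ2]
      field_simp
    · -- uniqueness
      rintro ⟨a, b⟩ ⟨ha0, hb0, hS, hE⟩
      simp only at ha0 hb0 hS hE
      have hdpos : (0:ℝ) < 2 * (1 + c1 * (a + b) ^ 2) := by positivity
      rw [S, eq_div_iff hdpos.ne'] at hS
      have e1 : b = 2 * c1 * a * (a + b) ^ 2 := by linear_combination -hS
      have hmul : a * b = 4 * c1 * c2 * a * b * (a + b) ^ 4 := by
        linear_combination b * hE + (2 * c2 * b * (a + b) ^ 2) * e1
      have hone : 4 * c1 * c2 * (a + b) ^ 4 = 1 := by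
        have hab : (0:ℝ) < a * b := mul_pos ha0 hb0
        have := mul_left_cancel₀ (ne_of_gt hab) (show a * b * (4 * c1 * c2 * (a + b) ^ 4) = a * b * 1 by linear_combination -hmul)
        linarith
      have hQ4 : 4 * c1 * c2 * Q ^ 4 = 1 := by
        have h4 : Q ^ 4 = (Q ^ 2) ^ 2 := by ring
        rw [h4, hQ2]
        field_simp
        linear_combination -4 * hs2
      have h4eq : (a + b) ^ 4 = Q ^ 4 := by
        have hc : (0:ℝ) < 4 * c1 * c2 := by positivity
        have := mul_left_cancel₀ (ne_of_gt hc) (show 4 * c1 * c2 * ((a + b) ^ 4) = 4 * c1 * c2 * (Q ^ 4) by linear_combination hone - hQ4)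
        exact this
      have hAQ : a + b = Q := by
        have hfac : (a + b - Q) * ((a + b + Q) * ((a + b) ^ 2 + Q ^ 2)) = 0 := by
          linear_combination h4eq
        rcases mul_eq_zero.1 hfac with h | h
        · linarith
        · have hab : (0:ℝ) < a + b := by linarith
          have hpos : (0:ℝ) < (a + b + Q) * ((a + b) ^ 2 + Q ^ 2) := by positivity
          exact absurd h hpos.ne'
      rw [hAQ] at e1
      have hb : b = t * a := by linear_combination e1 + a * h2c1Q
      have ha : a = Q / (1 + t) := by
        rw [eq_div_iff h1t.ne']
        linear_combination hAQ - hb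
      have hbv : b = t * Q / (1 + t) := by rw [hb, ha]; ring
      rw [Prod.mk.injEq]
      exact ⟨ha, hbv⟩
  · -- stability
    intro q1 q2 hq1 hq2 hS1 hE J hJ
    subst hJ
    have hdpos : (0:ℝ) < 2 * (1 + c1 * (q1 + q2) ^ 2) := by positivity
    rw [S, eq_div_iff hdpos.ne'] at hS1
    have e1 : q2 = 2 * c1 * q1 * (q1 + q2) ^ 2 := by linear_combination -hS1
    have hQ0 : (0:ℝ) < q1 + q2 := by linarith
    have hM0 : (0:ℝ) < 2 * q1 + q2 := by linarith
    have hP0 : (0:ℝ) < q1 + 3 * q2 := by linarith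
    have hc1eq : c1 = q2 / (2 * q1 * (q1 + q2) ^ 2) := by
      rw [eq_div_iff (by positivity)]
      linear_combination -e1
    have hc2eq : c2 = q1 / (2 * q2 * (q1 + q2) ^ 2) := by
      rw [eq_div_iff (by positivity)]
      linear_combination -hE
    -- derivative in x
    have hder1 : HasDerivAt (fun x => S c1 x q2)
        ((2 * (2 * (1 + c1 * (q1 + q2) ^ 2)) - (2 * q1 + q2) * (4 * c1 * (q1 + q2))) /
          (2 * (1 + c1 * (q1 + q2) ^ 2)) ^ 2) q1 := by
      have hf : HasDerivAt (fun x : ℝ => 2 * x + q2) 2 q1 := by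
        simpa using ((hasDerivAt_id q1).const_mul 2).add_const q2
      have hg : HasDerivAt (fun x : ℝ => 2 * (1 + c1 * (x + q2) ^ 2)) (4 * c1 * (q1 + q2)) q1 := by
        have h := (((((hasDerivAt_id q1).add_const q2).pow 2).const_mul c1).const_add 1).const_mul 2
        exact h.congr_deriv (by simp only [id_eq]; push_cast; ring)
      exact hf.div hg hdpos.ne'
    have hder2 : HasDerivAt (fun y => S c1 q1 y)
        ((1 * (2 * (1 + c1 * (q1 + q2) ^ 2)) - (2 * q1 + q2) * (4 * c1 * (q1 + q2))) /
          (2 * (1 + c1 * (q1 + q2) ^ 2)) ^ 2) q2 := by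
      have hf : HasDerivAt (fun y : ℝ => 2 * q1 + y) 1 q2 := by
        simpa using (hasDerivAt_id q2).const_add (2 * q1)
      have hg : HasDerivAt (fun y : ℝ => 2 * (1 + c1 * (q1 + y) ^ 2)) (4 * c1 * (q1 + q2)) q2 := by
        have h := (((((hasDerivAt_id q2).const_add q1).pow 2).const_mul c1).const_add 1).const_mul 2
        exact h.congr_deriv (by simp only [id_eq]; push_cast; ring)
      exact hf.div hg hdpos.ne'
    have hd1 : deriv (fun x => S c1 x q2) q1 = 2 * q1 ^ 2 / ((q1 + q2) * (2 * q1 + q2)) := by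
      rw [hder1.deriv, hc1eq]
      field_simp
      ring
    have hd2 : deriv (fun y => S c1 q1 y) q2 = q1 * (q1 - q2) / ((q1 + q2) * (2 * q1 + q2)) := by
      rw [hder2.deriv, hc1eq]
      field_simp
      ring
    have hr : -(4 * c2 * q1 * q2 + 4 * c2 * q2 ^ 2 - 1) /
        (2 * c2 * (q1 ^ 2 + 4 * q1 * q2 + 3 * q2 ^ 2)) =
        -(q2 * (q1 - q2)) / (q1 * (q1 + 3 * q2)) := by
      rw [hc2eq]
      field_simp
      ring
    simp only [Matrix.trace_fin_two_of, Matrix.det_fin_two_of]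
    rw [hd1, hd2, hr]
    refine ⟨?_, ?_, ?_⟩
    · rw [gt_iff_lt]
      refine hkey _ ((q1 + q2) * (2 * q1 + q2) * (q1 * (q1 + 3 * q2))
          + 2 * q1 ^ 2 * (q1 * (q1 + 3 * q2)) + q1 * (q1 - q2) * (q2 * (q1 - q2)))
        (((q1 + q2) * (2 * q1 + q2)) * (q1 * (q1 + 3 * q2))) ?_ ?_ (by positivity)
      · field_simp
        try ring
      · nlinarith [sq_nonneg (q1 - q2), mul_pos hq1 hq2, mul_pos hQ0 hM0]
    · rw [gt_iff_lt]
      refine hkey _ ((q1 + q2) * (2 * q1 + q2) * (q1 * (q1 + 3 * q2))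
          - 2 * q1 ^ 2 * (q1 * (q1 + 3 * q2)) + q1 * (q1 - q2) * (q2 * (q1 - q2)))
        (((q1 + q2) * (2 * q1 + q2)) * (q1 * (q1 + 3 * q2))) ?_ ?_ (by positivity)
      · field_simp
        try ring
      · nlinarith [sq_nonneg (q1 - q2), mul_pos hq1 hq2, mul_pos (mul_pos hq1 hq2) hq2]
    · rw [gt_iff_lt]
      refine hkey _ ((q1 + q2) * (2 * q1 + q2) * (q1 * (q1 + 3 * q2))
          - q1 * (q1 - q2) * (q2 * (q1 - q2)))
        (((q1 + q2) * (2 * q1 + q2)) * (q1 * (q1 + 3 * q2))) ?_ ?_ (by positivity)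
      · field_simp
        try ring
      · nlinarith [sq_nonneg (q1 - q2), mul_pos hq1 hq2, mul_pos (mul_pos hq1 hq2) hq2]
end

section
/- (Model BB) For all c1, c2 > 0, the system q2 = 2*c1*q1*(q1+q2)^2, q1 = 2*c2*q2*(q1+q2)^2 with q1, q2 > 0 has exactly one solution (q1*,q2*); moreover the Jacobian matrix J = [[0, R1'(q2*)],[R2'(q1*), 0]] satisfies Jury's conditions 1 + tr(J) + det(J) > 0, 1 - tr(J) + det(J) > 0, and 1 - det(J) > 0 (equivalently |R1'(q2*)*R2'(q1*)| < 1); i.e., the unique positive equilibrium of Model BB is locally stable for all feasible parameter values. -/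
/-!
For the total output `s = q1 + q2` the equilibrium equations say `q2 / q1 = 2 c1 s²` and
`q1 / q2 = 2 c2 s²`; multiplying them gives `4 c1 c2 s⁴ = 1`. So `s` is the unique positive fourth
root of `1 / (4 c1 c2)`, and the first equation then recovers `q1 = s / (1 + 2 c1 s²)`.

On the best-response curve `y = 2 c x (x + y)²` the slope simplifies to `(x - y) x / (y (y + 3x))`,
so at the equilibrium the product of the two slopes is `-(q1 - q2)² / ((3q1 + q2)(q1 + 3q2))`,
which lies in `(-1, 0]`. Since the Jacobian is antidiagonal, Jury's conditions reduce to exactly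
this bound.
-/

open Matrix

section Equilibrium

variable {c1 c2 : ℝ}

def IsPosEquilibrium (c1 c2 : ℝ) (p : ℝ × ℝ) : Prop :=
  0 < p.1 ∧ 0 < p.2 ∧
    p.2 = 2 * c1 * p.1 * (p.1 + p.2) ^ 2 ∧ p.1 = 2 * c2 * p.2 * (p.1 + p.2) ^ 2

noncomputable def equilibriumOfTotal (c1 s : ℝ) : ℝ × ℝ :=
  (s / (1 + 2 * c1 * s ^ 2), 2 * c1 * s ^ 3 / (1 + 2 * c1 * s ^ 2))

theorem equilibriumOfTotal_fst_add_snd (hc1 : 0 < c1) (s : ℝ) :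
    (equilibriumOfTotal c1 s).1 + (equilibriumOfTotal c1 s).2 = s := by
  have hd : 0 < 1 + 2 * c1 * s ^ 2 := by positivity
  simp only [equilibriumOfTotal]
  field_simp

theorem isPosEquilibrium_equilibriumOfTotal (hc1 : 0 < c1) {s : ℝ} (hs : 0 < s)
    (hs4 : 4 * c1 * c2 * s ^ 4 = 1) : IsPosEquilibrium c1 c2 (equilibriumOfTotal c1 s) := by
  have hd : 0 < 1 + 2 * c1 * s ^ 2 := by positivity
  rw [IsPosEquilibrium, equilibriumOfTotal_fst_add_snd hc1]
  simp only [equilibriumOfTotal]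
  refine ⟨by positivity, by positivity, by field_simp, ?_⟩
  field_simp
  linear_combination -hs4

namespace IsPosEquilibrium

variable {p : ℝ × ℝ}

theorem total_pos (hp : IsPosEquilibrium c1 c2 p) : 0 < p.1 + p.2 :=
  add_pos hp.1 hp.2.1

theorem total_pow_four (hp : IsPosEquilibrium c1 c2 p) :
    4 * c1 * c2 * (p.1 + p.2) ^ 4 = 1 := by
  obtain ⟨hq1, -, h1, h2⟩ := hp
  have hkey : p.1 * (4 * c1 * c2 * (p.1 + p.2) ^ 4 - 1) = 0 := by
    linear_combination (-(2 * c2 * (p.1 + p.2) ^ 2)) * h1 - h2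
  linarith [(mul_eq_zero.1 hkey).resolve_left hq1.ne']

theorem eq_equilibriumOfTotal (hc1 : 0 < c1) (hp : IsPosEquilibrium c1 c2 p) :
    p = equilibriumOfTotal c1 (p.1 + p.2) := by
  obtain ⟨-, -, h1, -⟩ := hp
  have hd : 0 < 1 + 2 * c1 * (p.1 + p.2) ^ 2 := by positivity
  ext <;> simp only [equilibriumOfTotal] <;> field_simp
  · linear_combination -h1
  · linear_combination h1

end IsPosEquilibrium

end Equilibrium

theorem existsUnique_pos_pow_eq {a : ℝ} (ha : 0 < a) {n : ℕ} (hn : n ≠ 0) :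
    ∃! s : ℝ, 0 < s ∧ s ^ n = a :=
  ⟨a ^ (n⁻¹ : ℝ), ⟨by positivity, Real.rpow_inv_natCast_pow ha.le hn⟩,
    fun _ ⟨hs, hsa⟩ => (pow_left_inj₀ hs.le (by positivity) hn).1
      (hsa.trans (Real.rpow_inv_natCast_pow ha.le hn).symm)⟩

/-- The implicit derivative `R_c'(y)` of the best response, written in terms of `x = R_c(y)`. -/
noncomputable def responseSlope (c x y : ℝ) : ℝ :=
  -(4 * c * y * x + 4 * c * x ^ 2 - 1) / (2 * c * (y ^ 2 + 4 * x * y + 3 * x ^ 2))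

theorem responseSlope_eq {c x y : ℝ} (hc : 0 < c) (hx : 0 < x) (hy : 0 < y)
    (h : y = 2 * c * x * (x + y) ^ 2) :
    responseSlope c x y = (x - y) * x / (y * (y + 3 * x)) := by
  rw [responseSlope, div_eq_div_iff (by positivity) (by positivity)]
  linear_combination (y + 3 * x) * h

theorem responseSlope_mul_responseSlope {c1 c2 q1 q2 : ℝ} (hc1 : 0 < c1) (hc2 : 0 < c2)
    (hp : IsPosEquilibrium c1 c2 (q1, q2)) :
    responseSlope c1 q1 q2 * responseSlope c2 q2 q1
      = -(q1 - q2) ^ 2 / ((q2 + 3 * q1) * (q1 + 3 * q2)) := by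
  obtain ⟨hq1, hq2, h1, h2⟩ := hp
  rw [responseSlope_eq hc1 hq1 hq2 h1, responseSlope_eq hc2 hq2 hq1 (by rw [add_comm]; exact h2)]
  field_simp
  ring

theorem abs_neg_sq_sub_div_lt_one {x y : ℝ} (hx : 0 < x) (hy : 0 < y) :
    |-(x - y) ^ 2 / ((y + 3 * x) * (x + 3 * y))| < 1 := by
  rw [abs_div, abs_neg, abs_of_nonneg (sq_nonneg _), abs_of_pos (by positivity),
    div_lt_one (by positivity)]
  nlinarith [mul_pos hx hy]

theorem jury_antidiagonal {a b : ℝ} (h : |a * b| < 1) :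
    1 + trace !![0, a; b, 0] + det !![0, a; b, 0] > 0 ∧
      1 - trace !![0, a; b, 0] + det !![0, a; b, 0] > 0 ∧ 1 - det !![0, a; b, 0] > 0 := by
  rw [trace_fin_two_of, det_fin_two_of]
  obtain ⟨hlo, hhi⟩ := abs_lt.1 h
  refine ⟨?_, ?_, ?_⟩ <;> linarith

/-- Model BB: the equilibrium system `q2 = 2*c1*q1*(q1+q2)^2`,
`q1 = 2*c2*q2*(q1+q2)^2` has exactly one positive solution, and at that
solution the Jacobian matrix `[[0, R1'],[R2', 0]]` (with the implicit
derivatives of the best-response functions) satisfies Jury's conditions. -/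
theorem modelBB_unique_stable (c1 c2 : ℝ) (hc1 : 0 < c1) (hc2 : 0 < c2) :
    (∃! p : ℝ × ℝ, 0 < p.1 ∧ 0 < p.2 ∧
      p.2 = 2 * c1 * p.1 * (p.1 + p.2) ^ 2 ∧
      p.1 = 2 * c2 * p.2 * (p.1 + p.2) ^ 2) ∧
    (∀ q1 q2 : ℝ, 0 < q1 → 0 < q2 →
      q2 = 2 * c1 * q1 * (q1 + q2) ^ 2 → q1 = 2 * c2 * q2 * (q1 + q2) ^ 2 →
      ∀ J : Matrix (Fin 2) (Fin 2) ℝ,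
        J = !![0, -(4 * c1 * q2 * q1 + 4 * c1 * q1 ^ 2 - 1) /
                 (2 * c1 * (q2 ^ 2 + 4 * q1 * q2 + 3 * q1 ^ 2));
               -(4 * c2 * q1 * q2 + 4 * c2 * q2 ^ 2 - 1) /
                 (2 * c2 * (q1 ^ 2 + 4 * q1 * q2 + 3 * q2 ^ 2)), 0] →
        1 + Matrix.trace J + Matrix.det J > 0 ∧
        1 - Matrix.trace J + Matrix.det J > 0 ∧
        1 - Matrix.det J > 0) := by
  refine ⟨?_, fun q1 q2 hq1 hq2 h1 h2 J hJ => ?_⟩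
  · obtain ⟨s, ⟨hs, hs4⟩, hs_unique⟩ :=
      existsUnique_pos_pow_eq (inv_pos.2 (by positivity : 0 < 4 * c1 * c2)) four_ne_zero
    refine ⟨equilibriumOfTotal c1 s,
      isPosEquilibrium_equilibriumOfTotal hc1 hs (hs4 ▸ mul_inv_cancel₀ (by positivity)),
      fun p (hp : IsPosEquilibrium c1 c2 p) => ?_⟩
    rw [hp.eq_equilibriumOfTotal hc1,
      hs_unique _ ⟨hp.total_pos, eq_inv_of_mul_eq_one_right hp.total_pow_four⟩]
  · have hJ' : J = !![0, responseSlope c1 q1 q2; responseSlope c2 q2 q1, 0] := by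
      rw [hJ, responseSlope, responseSlope, mul_right_comm 4 q2 q1]
    rw [hJ']
    apply jury_antidiagonal
    rw [responseSlope_mul_responseSlope hc1 hc2 ⟨hq1, hq2, h1, h2⟩]
    exact abs_neg_sq_sub_div_lt_one hq1 hq2
end

section
/- (Model BR) For all c1, c2 > 0, the system q2 = 2*c1*q1*(q1+q2)^2, q1 = 2*c2*q2*(q1+q2)^2 with q1, q2 > 0 has exactly one solution (q1*,q2*); moreover |R1'(q2*) * R2'(q1*)| < 1, where R_i'(y) = -(4*c_i*y*x + 4*c_i*x^2 - 1)/(2*c_i*(y^2 + 4*x*y + 3*x^2)) with x = R_i(y); i.e., the unique positive equilibrium of the one-dimensional system q1(t+1) = R1(R2(q1(t))) is locally stable for all feasible parameter values. -/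
private lemma modelBR_stab (c1 c2 q1 q2 : ℝ) (hc1 : 0 < c1) (hc2 : 0 < c2)
    (hq1 : 0 < q1) (hq2 : 0 < q2)
    (h1 : q2 = 2 * c1 * q1 * (q1 + q2) ^ 2)
    (h2 : q1 = 2 * c2 * q2 * (q1 + q2) ^ 2) :
    |(-(4 * c1 * q2 * q1 + 4 * c1 * q1 ^ 2 - 1) /
        (2 * c1 * (q2 ^ 2 + 4 * q1 * q2 + 3 * q1 ^ 2))) *
      (-(4 * c2 * q1 * q2 + 4 * c2 * q2 ^ 2 - 1) /
        (2 * c2 * (q1 ^ 2 + 4 * q1 * q2 + 3 * q2 ^ 2)))| < 1 := by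
  have hS : (0:ℝ) < q1 + q2 := by linarith
  have e1 : c1 = q2 / (2 * q1 * (q1 + q2) ^ 2) := by
    rw [eq_div_iff (by positivity)]; linear_combination -h1
  have e2 : c2 = q1 / (2 * q2 * (q1 + q2) ^ 2) := by
    rw [eq_div_iff (by positivity)]; linear_combination -h2
  have key : (-(4 * c1 * q2 * q1 + 4 * c1 * q1 ^ 2 - 1) /
        (2 * c1 * (q2 ^ 2 + 4 * q1 * q2 + 3 * q1 ^ 2))) *
      (-(4 * c2 * q1 * q2 + 4 * c2 * q2 ^ 2 - 1) /
        (2 * c2 * (q1 ^ 2 + 4 * q1 * q2 + 3 * q2 ^ 2)))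
      = -((q1 - q2) ^ 2 / ((3 * q1 + q2) * (q1 + 3 * q2))) := by
    rw [e1, e2]
    have h3 : q2 ^ 2 + 4 * q1 * q2 + 3 * q1 ^ 2 = (q1 + q2) * (3 * q1 + q2) := by ring
    have h4 : q1 ^ 2 + 4 * q1 * q2 + 3 * q2 ^ 2 = (q1 + q2) * (q1 + 3 * q2) := by ring
    field_simp
    ring
  rw [key, abs_neg, abs_div, abs_of_nonneg (sq_nonneg _),
    abs_of_pos (by positivity), div_lt_one (by positivity)]
  nlinarith [mul_pos hq1 hq2, sq_nonneg (q1 + q2)]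

/-- Model BR: the equilibrium system `q2 = 2*c1*q1*(q1+q2)^2`,
`q1 = 2*c2*q2*(q1+q2)^2` has exactly one positive solution, and at that
solution `|R1'(q2) * R2'(q1)| < 1`, so the unique positive equilibrium of the
one-dimensional map `q1 ↦ R1(R2(q1))` is locally stable. -/
theorem modelBR_unique_stable (c1 c2 : ℝ) (hc1 : 0 < c1) (hc2 : 0 < c2) :
    (∃! p : ℝ × ℝ, 0 < p.1 ∧ 0 < p.2 ∧
      p.2 = 2 * c1 * p.1 * (p.1 + p.2) ^ 2 ∧
      p.1 = 2 * c2 * p.2 * (p.1 + p.2) ^ 2) ∧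
    (∀ q1 q2 : ℝ, 0 < q1 → 0 < q2 →
      q2 = 2 * c1 * q1 * (q1 + q2) ^ 2 → q1 = 2 * c2 * q2 * (q1 + q2) ^ 2 →
      |(-(4 * c1 * q2 * q1 + 4 * c1 * q1 ^ 2 - 1) /
          (2 * c1 * (q2 ^ 2 + 4 * q1 * q2 + 3 * q1 ^ 2))) *
        (-(4 * c2 * q1 * q2 + 4 * c2 * q2 ^ 2 - 1) /
          (2 * c2 * (q1 ^ 2 + 4 * q1 * q2 + 3 * q2 ^ 2)))| < 1) := by
  constructor
  · -- existence and uniqueness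
    set k : ℝ := Real.sqrt (c1 / c2) with hkdef
    have hk : 0 < k := Real.sqrt_pos.mpr (by positivity)
    have hk2 : k ^ 2 = c1 / c2 := Real.sq_sqrt (by positivity)
    have hk2' : c2 * k ^ 2 = c1 := by
      rw [hk2]; field_simp
    set A : ℝ := Real.sqrt (k / (2 * c1)) / (1 + k) with hAdef
    have hApos : 0 < A := div_pos (Real.sqrt_pos.mpr (by positivity)) (by linarith)
    have hA2 : A ^ 2 = k / (2 * c1) / (1 + k) ^ 2 := by
      rw [hAdef, div_pow, Real.sq_sqrt (by positivity)]
    have hmain : 2 * c1 * A ^ 2 * (1 + k) ^ 2 = k := by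
      rw [hA2]; field_simp
    have hmain2 : 2 * c2 * k * A ^ 2 * (1 + k) ^ 2 = 1 := by
      apply mul_left_cancel₀ (ne_of_gt hk)
      linear_combination hmain + 2 * A ^ 2 * (1 + k) ^ 2 * hk2'
    refine ⟨(A, k * A), ⟨hApos, by positivity, ?_, ?_⟩, ?_⟩
    · -- first equation
      show k * A = 2 * c1 * A * (A + k * A) ^ 2
      linear_combination (-A) * hmain
    · -- second equation
      show A = 2 * c2 * (k * A) * (A + k * A) ^ 2
      linear_combination (-A) * hmain2
    · rintro ⟨a, b⟩ ⟨ha, hb, h1, h2⟩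
      simp only at ha hb h1 h2
      have hcb : c2 * b ^ 2 = c1 * a ^ 2 := by
        linear_combination c2 * b * h1 - c1 * a * h2
      have hb2 : b ^ 2 = k ^ 2 * a ^ 2 := by
        apply mul_left_cancel₀ (ne_of_gt hc2)
        linear_combination hcb - a ^ 2 * hk2'
      have hba : b = k * a := by
        have h0 : (b - k * a) * (b + k * a) = 0 := by linear_combination hb2
        rcases mul_eq_zero.mp h0 with h | h
        · linarith
        · nlinarith [mul_pos hk ha]
      have ha2 : 2 * c1 * a ^ 2 * (1 + k) ^ 2 = k := by
        apply mul_left_cancel₀ (ne_of_gt ha)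
        rw [hba] at h1
        linear_combination -h1
      have haA : a = A := by
        have h0 : (a - A) * (a + A) = 0 := by
          apply mul_left_cancel₀ (ne_of_gt (show (0:ℝ) < 2 * c1 * (1 + k) ^ 2 by positivity))
          linear_combination ha2 - hmain
        rcases mul_eq_zero.mp h0 with h | h
        · linarith
        · linarith
      simp only [Prod.mk.injEq]
      exact ⟨haA, by rw [hba, haA]⟩
  · intro q1 q2 hq1 hq2 h1 h2
    exact modelBR_stab c1 c2 q1 q2 hc1 hc2 hq1 hq2 h1 h2
end

section
/- (Model LR) For all c1, c2 > 0, the system q2 = 2*c1*q1*(q1+q2)^2, q1 = 2*c2*q2*(q1+q2)^2 with q1, q2 > 0 has exactly one solution (q1*,q2*); moreover |(dS1/dq1)(q1*,q2*) + (dS1/dq2)(q1*,q2*) * R2'(q1*)| < 1, where S1(x,y) = (2x+y)/(2*(1+c1*(x+y)^2)) and R2'(q1) = -(4*c2*q1*q2 + 4*c2*q2^2 - 1)/(2*c2*(q1^2 + 4*q1*q2 + 3*q2^2)); i.e., the unique positive equilibrium of the one-dimensional system q1(t+1) = S1(q1(t), R2(q1(t))) is locally stable for all feasible parameter values. -/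
private theorem modelLR_uniq_aux (c1 c2 : ℝ) (hc1 : 0 < c1) (hc2 : 0 < c2) :
    (∃! p : ℝ × ℝ, 0 < p.1 ∧ 0 < p.2 ∧
      p.2 = 2 * c1 * p.1 * (p.1 + p.2) ^ 2 ∧
      p.1 = 2 * c2 * p.2 * (p.1 + p.2) ^ 2) := by
  obtain ⟨a1, ha1, ha1sq⟩ : ∃ a, 0 < a ∧ a^2 = c1 :=
    ⟨Real.sqrt c1, Real.sqrt_pos.2 hc1, Real.sq_sqrt hc1.le⟩
  obtain ⟨a2, ha2, ha2sq⟩ : ∃ a, 0 < a ∧ a^2 = c2 :=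
    ⟨Real.sqrt c2, Real.sqrt_pos.2 hc2, Real.sq_sqrt hc2.le⟩
  subst ha1sq ha2sq
  set s : ℝ := Real.sqrt (1/(2*a1*a2)) with hs_def
  have hs : 0 < s := Real.sqrt_pos.2 (by positivity)
  have hs2 : 2*a1*a2*s^2 = 1 := by
    have h : s^2 = 1/(2*a1*a2) := Real.sq_sqrt (le_of_lt (by positivity))
    rw [h]; field_simp
  have hsum : a2*s/(a1+a2) + a1*s/(a1+a2) = s := by
    field_simp; ring
  refine ⟨(a2*s/(a1+a2), a1*s/(a1+a2)), ⟨by positivity, by positivity, ?_, ?_⟩, ?_⟩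
  · show a1*s/(a1+a2) = 2*a1^2*(a2*s/(a1+a2))*((a2*s/(a1+a2) + a1*s/(a1+a2))^2)
    rw [hsum]
    have h : 2*a1^2*(a2*s/(a1+a2))*s^2 = (a1*s/(a1+a2)) * (2*a1*a2*s^2) := by ring
    rw [h, hs2, mul_one]
  · show a2*s/(a1+a2) = 2*a2^2*(a1*s/(a1+a2))*((a2*s/(a1+a2) + a1*s/(a1+a2))^2)
    rw [hsum]
    have h : 2*a2^2*(a1*s/(a1+a2))*s^2 = (a2*s/(a1+a2)) * (2*a1*a2*s^2) := by ring
    rw [h, hs2, mul_one]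
  · rintro ⟨a, b⟩ ⟨ha, hb, h1, h2⟩
    simp only at ha hb h1 h2 ⊢
    have ht : (0:ℝ) < a + b := by linarith
    have h4 : a * (4*a1^2*a2^2*(a+b)^4) = a * 1 := by
      linear_combination -h2 - 2*a2^2*(a+b)^2*h1
    have h4' : 4*a1^2*a2^2*(a+b)^4 = 1 := mul_left_cancel₀ ha.ne' h4
    have ht2 : 2*a1*a2*(a+b)^2 = 1 := by
      have hf : (2*a1*a2*(a+b)^2 - 1) * (2*a1*a2*(a+b)^2 + 1) = 0 := by
        linear_combination h4'
      rcases mul_eq_zero.1 hf with h | h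
      · linarith
      · nlinarith [mul_pos (mul_pos ha1 ha2) (pow_pos ht 2)]
    have hts : a + b = s := by
      have hsq : 2*a1*a2*(a+b)^2 = 2*a1*a2*s^2 := ht2.trans hs2.symm
      have hsq' : (a+b)^2 = s^2 := mul_left_cancel₀ (by positivity) hsq
      have hf : (a+b - s)*(a+b+s) = 0 := by linear_combination hsq'
      rcases mul_eq_zero.1 hf with h | h
      · linarith
      · linarith
    have hcab : 2*(a+b)^2 * (a1^2*a^2) = 2*(a+b)^2 * (a2^2*b^2) := by
      linear_combination b*h2 - a*h1
    have hcab' : a1^2*a^2 = a2^2*b^2 := mul_left_cancel₀ (by positivity) hcab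
    have hab : a1*a = a2*b := by
      have hf : (a1*a - a2*b)*(a1*a + a2*b) = 0 := by linear_combination hcab'
      rcases mul_eq_zero.1 hf with h | h
      · linarith
      · nlinarith [mul_pos ha1 ha, mul_pos ha2 hb]
    have haval : a = a2*s/(a1+a2) := by
      rw [eq_div_iff (by positivity : a1+a2 ≠ 0)]
      linear_combination hab + a2*hts
    have hbval : b = a1*s/(a1+a2) := by
      rw [eq_div_iff (by positivity : a1+a2 ≠ 0)]
      linear_combination -hab + a1*hts
    exact Prod.ext haval hbval

private theorem modelLR_stab_aux (c1 c2 : ℝ) (hc1 : 0 < c1) (hc2 : 0 < c2)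
    (q1 q2 : ℝ) (hq1 : 0 < q1) (hq2 : 0 < q2)
    (h1 : q2 = 2 * c1 * q1 * (q1 + q2) ^ 2) (h2 : q1 = 2 * c2 * q2 * (q1 + q2) ^ 2) :
      |deriv (fun x => S c1 x q2) q1 +
        deriv (fun y => S c1 q1 y) q2 *
          (-(4 * c2 * q1 * q2 + 4 * c2 * q2 ^ 2 - 1) /
            (2 * c2 * (q1 ^ 2 + 4 * q1 * q2 + 3 * q2 ^ 2)))| < 1 := by
  have hs0 : (0:ℝ) < q1 + q2 := by linarith
  have hden : (2*(1+c1*(q1+q2)^2)) ≠ 0 := by positivity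
  have hu : HasDerivAt (fun x : ℝ => 2*x+q2) 2 q1 := by
    simpa using ((hasDerivAt_id q1).const_mul (2:ℝ)).add_const q2
  have hv : HasDerivAt (fun x : ℝ => 2*(1+c1*(x+q2)^2)) (4*c1*(q1+q2)) q1 := by
    have h := (((((hasDerivAt_id q1).add_const q2).pow 2).const_mul c1).const_add 1).const_mul (2:ℝ)
    refine h.congr_deriv ?_
    simp; ring
  have derivA : deriv (fun x => S c1 x q2) q1 =
      (2 * (2*(1+c1*(q1+q2)^2)) - (2*q1+q2) * (4*c1*(q1+q2))) / (2*(1+c1*(q1+q2)^2))^2 := by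
    have := (hu.div hv hden).deriv
    exact this
  have hu' : HasDerivAt (fun y : ℝ => 2*q1+y) 1 q2 := by
    simpa using (hasDerivAt_id q2).const_add (2*q1)
  have hv' : HasDerivAt (fun y : ℝ => 2*(1+c1*(q1+y)^2)) (4*c1*(q1+q2)) q2 := by
    have h := (((((hasDerivAt_id q2).const_add q1).pow 2).const_mul c1).const_add 1).const_mul (2:ℝ)
    refine h.congr_deriv ?_
    simp; ring
  have derivB : deriv (fun y => S c1 q1 y) q2 =
      (1 * (2*(1+c1*(q1+q2)^2)) - (2*q1+q2) * (4*c1*(q1+q2))) / (2*(1+c1*(q1+q2)^2))^2 := by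
    have := (hu'.div hv' hden).deriv
    exact this
  have hc1v : c1 = q2 / (2*q1*(q1+q2)^2) := by
    rw [eq_div_iff (by positivity)]; linarith [h1]
  have hc2v : c2 = q1 / (2*q2*(q1+q2)^2) := by
    rw [eq_div_iff (by positivity)]; linarith [h2]
  have hq1' := hq1.ne'
  have hq2' := hq2.ne'
  have hs0' := hs0.ne'
  have hDen : (0:ℝ) < (q1+q2)*(2*q1+q2)*(q1+3*q2) := by positivity
  have key : deriv (fun x => S c1 x q2) q1 +
        deriv (fun y => S c1 q1 y) q2 *
          (-(4 * c2 * q1 * q2 + 4 * c2 * q2 ^ 2 - 1) /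
            (2 * c2 * (q1 ^ 2 + 4 * q1 * q2 + 3 * q2 ^ 2)))
      = (2*q1^3 + 5*q1^2*q2 + 2*q1*q2^2 - q2^3) / ((q1+q2)*(2*q1+q2)*(q1+3*q2)) := by
    rw [derivA, derivB, hc1v, hc2v]
    have h3 : (2*q1+q2) ≠ 0 := by positivity
    have h4 : (q1+3*q2) ≠ 0 := by positivity
    field_simp
    ring
  rw [key, abs_lt]
  constructor
  · rw [lt_div_iff₀ hDen]
    nlinarith [pow_pos hq1 3, mul_pos (mul_pos hq1 hq1) hq2, mul_pos (mul_pos hq1 hq2) hq2, pow_pos hq2 3]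
  · rw [div_lt_one hDen]
    nlinarith [mul_pos hq2 (pow_pos hs0 2)]

/-- Model LR: the equilibrium system `q2 = 2*c1*q1*(q1+q2)^2`,
`q1 = 2*c2*q2*(q1+q2)^2` has exactly one positive solution, and at that
solution `|dS1/dq1 + dS1/dq2 * R2'(q1)| < 1`, so the unique positive
equilibrium of the one-dimensional map `q1 ↦ S1(q1, R2(q1))` is locally
stable. -/
theorem modelLR_unique_stable (c1 c2 : ℝ) (hc1 : 0 < c1) (hc2 : 0 < c2) :
    (∃! p : ℝ × ℝ, 0 < p.1 ∧ 0 < p.2 ∧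
      p.2 = 2 * c1 * p.1 * (p.1 + p.2) ^ 2 ∧
      p.1 = 2 * c2 * p.2 * (p.1 + p.2) ^ 2) ∧
    (∀ q1 q2 : ℝ, 0 < q1 → 0 < q2 →
      q2 = 2 * c1 * q1 * (q1 + q2) ^ 2 → q1 = 2 * c2 * q2 * (q1 + q2) ^ 2 →
      |deriv (fun x => S c1 x q2) q1 +
        deriv (fun y => S c1 q1 y) q2 *
          (-(4 * c2 * q1 * q2 + 4 * c2 * q2 ^ 2 - 1) /
            (2 * c2 * (q1 ^ 2 + 4 * q1 * q2 + 3 * q2 ^ 2)))| < 1) :=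
  ⟨modelLR_uniq_aux c1 c2 hc1 hc2,
   fun q1 q2 hq1 hq2 h1 h2 => modelLR_stab_aux c1 c2 hc1 hc2 q1 q2 hq1 hq2 h1 h2⟩
end

section
/- (Model AR) For all c1, c2 > 0 and all K with 0 < K < 1, the system q2 = 2*c1*q1*(q1+q2)^2, q1 = 2*c2*q2*(q1+q2)^2 with q1, q2 > 0 has exactly one solution (q1*,q2*); moreover |(1-K) + K * R1'(q2*) * R2'(q1*)| < 1, where R_i'(y) = -(4*c_i*y*x + 4*c_i*x^2 - 1)/(2*c_i*(y^2 + 4*x*y + 3*x^2)) with x = R_i(y); i.e., the unique positive equilibrium of the one-dimensional system q1(t+1) = (1-K)*q1(t) + K*R1(R2(q1(t))) is locally stable for all feasible parameter values. -/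
/-- Model AR: for any adjustment speed `K ∈ (0,1)`, the equilibrium system has
exactly one positive solution, and at that solution
`|(1-K) + K * R1'(q2) * R2'(q1)| < 1`, so the unique positive equilibrium of
the one-dimensional map `q1 ↦ (1-K)*q1 + K*R1(R2(q1))` is locally stable. -/
theorem modelAR_unique_stable (c1 c2 K : ℝ) (hc1 : 0 < c1) (hc2 : 0 < c2)
    (hK0 : 0 < K) (hK1 : K < 1) :
    (∃! p : ℝ × ℝ, 0 < p.1 ∧ 0 < p.2 ∧
      p.2 = 2 * c1 * p.1 * (p.1 + p.2) ^ 2 ∧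
      p.1 = 2 * c2 * p.2 * (p.1 + p.2) ^ 2) ∧
    (∀ q1 q2 : ℝ, 0 < q1 → 0 < q2 →
      q2 = 2 * c1 * q1 * (q1 + q2) ^ 2 → q1 = 2 * c2 * q2 * (q1 + q2) ^ 2 →
      |(1 - K) + K *
        (-(4 * c1 * q2 * q1 + 4 * c1 * q1 ^ 2 - 1) /
          (2 * c1 * (q2 ^ 2 + 4 * q1 * q2 + 3 * q1 ^ 2))) *
        (-(4 * c2 * q1 * q2 + 4 * c2 * q2 ^ 2 - 1) /
          (2 * c2 * (q1 ^ 2 + 4 * q1 * q2 + 3 * q2 ^ 2)))| < 1) := by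
  constructor
  · -- existence and uniqueness
    obtain ⟨r, hr, hr2⟩ : ∃ r : ℝ, 0 < r ∧ c2 * r ^ 2 = c1 := by
      refine ⟨Real.sqrt (c1 / c2), Real.sqrt_pos.mpr (div_pos hc1 hc2), ?_⟩
      rw [Real.sq_sqrt (le_of_lt (div_pos hc1 hc2))]
      field_simp
    have h1r : 0 < 1 + r := by linarith
    obtain ⟨a, hapos, ha2⟩ :
        ∃ a : ℝ, 0 < a ∧ 2 * c1 * (1 + r) ^ 2 * a ^ 2 = r := by
      refine ⟨Real.sqrt (r / (2 * c1 * (1 + r) ^ 2)),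
        Real.sqrt_pos.mpr (by positivity), ?_⟩
      rw [Real.sq_sqrt (by positivity : (0:ℝ) ≤ r / (2 * c1 * (1 + r) ^ 2))]
      field_simp
    refine ⟨(a, r * a), ⟨hapos, by positivity, ?_, ?_⟩, ?_⟩
    · -- first equation
      show r * a = 2 * c1 * a * (a + r * a) ^ 2
      linear_combination (-a) * ha2
    · -- second equation
      show a = 2 * c2 * (r * a) * (a + r * a) ^ 2
      have key : 2 * c2 * r * (1 + r) ^ 2 * a ^ 2 = 1 := by
        have hc1ne : c1 ≠ 0 := ne_of_gt hc1
        have key2 : c1 * (2 * c2 * r * (1 + r) ^ 2 * a ^ 2) = c1 * 1 := by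
          linear_combination (c2 * r) * ha2 + hr2
        exact mul_left_cancel₀ hc1ne key2
      linear_combination (-a) * key
    · -- uniqueness
      rintro ⟨p1, p2⟩ ⟨hp1, hp2, he1, he2⟩
      simp only at hp1 hp2 he1 he2 ⊢
      have hs : 0 < p1 + p2 := by linarith
      have hcc : c1 * p1 ^ 2 = c2 * p2 ^ 2 := by
        have h3 : (2 * (p1 + p2) ^ 2) * (c1 * p1 ^ 2 - c2 * p2 ^ 2) = 0 := by
          linear_combination p2 * he2 - p1 * he1
        have h4 : (2 * (p1 + p2) ^ 2) ≠ 0 := by positivity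
        rcases mul_eq_zero.mp h3 with h | h
        · exact absurd h h4
        · linarith
      have hp2r : p2 = r * p1 := by
        have hsq : c2 * (p2 ^ 2 - (r * p1) ^ 2) = 0 := by
          linear_combination -hcc - p1 ^ 2 * hr2
        have hsq' : p2 ^ 2 - (r * p1) ^ 2 = 0 := by
          rcases mul_eq_zero.mp hsq with h | h
          · exact absurd h (ne_of_gt hc2)
          · exact h
        have h5 : (p2 - r * p1) * (p2 + r * p1) = 0 := by
          linear_combination hsq'
        rcases mul_eq_zero.mp h5 with h | h
        · linarith
        · nlinarith [hr, hp1, hp2]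
      have he1' : r * p1 = 2 * c1 * p1 * (p1 + r * p1) ^ 2 := by
        rw [← hp2r]; exact he1
      have key : p1 * (2 * c1 * (1 + r) ^ 2 * p1 ^ 2 - r) = 0 := by
        linear_combination -he1'
      have key' : 2 * c1 * (1 + r) ^ 2 * p1 ^ 2 = r := by
        rcases mul_eq_zero.mp key with h | h
        · exact absurd h (ne_of_gt hp1)
        · linarith
      have hp1a : p1 = a := by
        have h7 : (2 * c1 * (1 + r) ^ 2) * (p1 ^ 2 - a ^ 2) = 0 := by
          linear_combination key' - ha2
        have h8 : p1 ^ 2 - a ^ 2 = 0 := by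
          rcases mul_eq_zero.mp h7 with h | h
          · exact absurd h (by positivity)
          · exact h
        have h5 : (p1 - a) * (p1 + a) = 0 := by linear_combination h8
        rcases mul_eq_zero.mp h5 with h | h
        · linarith
        · nlinarith [hapos, hp1]
      refine Prod.ext ?_ ?_ <;> simp only
      · exact hp1a
      · rw [hp2r, hp1a]
  · -- stability
    intro q1 q2 h1 h2 hq2 hq1
    have hs : 0 < q1 + q2 := by linarith
    have hd1 : (0:ℝ) < 2 * c1 * (q2 ^ 2 + 4 * q1 * q2 + 3 * q1 ^ 2) := by positivity
    have hd2 : (0:ℝ) < 2 * c2 * (q1 ^ 2 + 4 * q1 * q2 + 3 * q2 ^ 2) := by positivity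
    have hA : -(4 * c1 * q2 * q1 + 4 * c1 * q1 ^ 2 - 1) /
          (2 * c1 * (q2 ^ 2 + 4 * q1 * q2 + 3 * q1 ^ 2)) =
        q1 * (q1 - q2) / (q2 * (q2 + 3 * q1)) := by
      rw [div_eq_div_iff (ne_of_gt hd1) (by positivity)]
      linear_combination (q2 + 3 * q1) * hq2
    have hB : -(4 * c2 * q1 * q2 + 4 * c2 * q2 ^ 2 - 1) /
          (2 * c2 * (q1 ^ 2 + 4 * q1 * q2 + 3 * q2 ^ 2)) =
        q2 * (q2 - q1) / (q1 * (q1 + 3 * q2)) := by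
      rw [div_eq_div_iff (ne_of_gt hd2) (by positivity)]
      linear_combination (q1 + 3 * q2) * hq1
    rw [hA, hB]
    have hprod : q1 * (q1 - q2) / (q2 * (q2 + 3 * q1)) *
        (q2 * (q2 - q1) / (q1 * (q1 + 3 * q2))) =
        -((q1 - q2) ^ 2) / ((q2 + 3 * q1) * (q1 + 3 * q2)) := by
      rw [div_mul_div_comm, div_eq_div_iff (by positivity) (by positivity)]
      ring
    rw [mul_assoc, hprod]
    have hE : (0:ℝ) < (q2 + 3 * q1) * (q1 + 3 * q2) := by positivity
    set P : ℝ := -((q1 - q2) ^ 2) / ((q2 + 3 * q1) * (q1 + 3 * q2)) with hP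
    have hP1 : P ≤ 0 := by
      apply div_nonpos_of_nonpos_of_nonneg
      · nlinarith [sq_nonneg (q1 - q2)]
      · linarith
    have hP2 : -1 < P := by
      have h9 : (q1 - q2) ^ 2 < (q2 + 3 * q1) * (q1 + 3 * q2) := by
        nlinarith [h1, h2]
      have h10 : (q1 - q2) ^ 2 / ((q2 + 3 * q1) * (q1 + 3 * q2)) < 1 :=
        (div_lt_one hE).mpr h9
      rw [hP, neg_div]
      linarith
    clear hP hprod hA hB hq1 hq2 hd1 hd2
    clear_value P
    rw [abs_lt]
    constructor <;> nlinarith [hP1, hP2, hK0, hK1]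
end

section
/- (Model AB) For all c1, c2 > 0 and all K with 0 < K < 1, the system q2 = 2*c1*q1*(q1+q2)^2, q1 = 2*c2*q2*(q1+q2)^2 with q1, q2 > 0 has exactly one solution (q1*,q2*); moreover the Jacobian matrix J = [[1-K, K*R1'(q2*)],[R2'(q1*), 0]] satisfies Jury's conditions 1 + tr(J) + det(J) > 0, 1 - tr(J) + det(J) > 0, and 1 - det(J) > 0, where R_i'(y) = -(4*c_i*y*x + 4*c_i*x^2 - 1)/(2*c_i*(y^2 + 4*x*y + 3*x^2)) with x = R_i(y); i.e., the unique positive equilibrium of Model AB is locally stable for all feasible parameter values. -/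
set_option maxHeartbeats 1000000


/-- Model AB: for any adjustment speed `K ∈ (0,1)`, the equilibrium system has
exactly one positive solution, and at that solution the Jacobian matrix
`[[1-K, K*R1'],[R2', 0]]` satisfies Jury's stability conditions. -/
theorem modelAB_unique_stable (c1 c2 K : ℝ) (hc1 : 0 < c1) (hc2 : 0 < c2)
    (hK0 : 0 < K) (hK1 : K < 1) :
    (∃! p : ℝ × ℝ, 0 < p.1 ∧ 0 < p.2 ∧
      p.2 = 2 * c1 * p.1 * (p.1 + p.2) ^ 2 ∧
      p.1 = 2 * c2 * p.2 * (p.1 + p.2) ^ 2) ∧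
    (∀ q1 q2 : ℝ, 0 < q1 → 0 < q2 →
      q2 = 2 * c1 * q1 * (q1 + q2) ^ 2 → q1 = 2 * c2 * q2 * (q1 + q2) ^ 2 →
      ∀ J : Matrix (Fin 2) (Fin 2) ℝ,
        J = !![1 - K, K * (-(4 * c1 * q2 * q1 + 4 * c1 * q1 ^ 2 - 1) /
                 (2 * c1 * (q2 ^ 2 + 4 * q1 * q2 + 3 * q1 ^ 2)));
               -(4 * c2 * q1 * q2 + 4 * c2 * q2 ^ 2 - 1) /
                 (2 * c2 * (q1 ^ 2 + 4 * q1 * q2 + 3 * q2 ^ 2)), 0] →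
        1 + Matrix.trace J + Matrix.det J > 0 ∧
        1 - Matrix.trace J + Matrix.det J > 0 ∧
        1 - Matrix.det J > 0) := by
  have h0 : (0:ℝ) < (4*c1*c2)⁻¹ := by positivity
  set s : ℝ := ((4*c1*c2)⁻¹) ^ ((1:ℝ)/4) with hsdef
  have hs : 0 < s := Real.rpow_pos_of_pos h0 _
  have hs4 : s ^ 4 = (4*c1*c2)⁻¹ := by
    rw [hsdef, ← Real.rpow_natCast (((4*c1*c2)⁻¹) ^ ((1:ℝ)/4)) 4,
      ← Real.rpow_mul h0.le]
    norm_num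
  have hkey : 4*c1*c2*s^4 = 1 := by
    rw [hs4]; field_simp
  have hd : (0:ℝ) < 1 + 2*c1*s^2 := by positivity
  set a : ℝ := s / (1 + 2*c1*s^2) with hadef
  set b : ℝ := 2*c1*s^3 / (1 + 2*c1*s^2) with hbdef
  have ha : 0 < a := by positivity
  have hb : 0 < b := by positivity
  have hab : a + b = s := by
    rw [hadef, hbdef, ← add_div, eq_comm, eq_div_iff hd.ne']; ring
  constructor
  · refine ⟨(a, b), ⟨ha, hb, ?_, ?_⟩, ?_⟩
    · show b = 2*c1*a*(a+b)^2
      rw [hab, hadef, hbdef]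
      field_simp
    · show a = 2*c2*b*(a+b)^2
      rw [hab, hadef, hbdef]
      field_simp
      linear_combination (-1)*hkey
    · rintro ⟨p1, p2⟩ ⟨hp1, hp2, he1, he2⟩
      simp only at hp1 hp2 he1 he2
      have ht : 0 < p1 + p2 := by linarith
      have hmul : p1 * (4*c1*c2*(p1+p2)^4) = p1 * 1 := by
        linear_combination (-1:ℝ)*he2 - (2*c2*(p1+p2)^2)*he1
      have hkey2 : 4*c1*c2*(p1+p2)^4 = 1 := mul_left_cancel₀ hp1.ne' hmul
      have hts4 : (p1+p2)^4 = s^4 := by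
        rw [hs4]
        exact eq_inv_of_mul_eq_one_left (by linear_combination hkey2)
      have hts : p1 + p2 = s := by
        rcases lt_trichotomy (p1+p2) s with h|h|h
        · nlinarith [pow_lt_pow_left₀ h ht.le (n := 4) (by norm_num)]
        · exact h
        · nlinarith [pow_lt_pow_left₀ h hs.le (n := 4) (by norm_num)]
      have hp1a : p1 = a := by
        rw [hadef, eq_div_iff hd.ne']
        linear_combination (-1:ℝ)*he1 + (1 - 2*c1*p1*(s + p1 + p2))*hts
      have hp2b : p2 = b := by
        have hab' := hab
        linear_combination hts - hab' - hp1a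
      simp only [Prod.mk.injEq]
      exact ⟨hp1a, hp2b⟩
  · intro q1 q2 hq1 hq2 e1 e2 J hJ
    subst hJ
    have hD1 : (0:ℝ) < 2*c1*(q2^2 + 4*q1*q2 + 3*q1^2) := by
      have : (0:ℝ) < q2^2 + 4*q1*q2 + 3*q1^2 := by nlinarith [mul_pos hq1 hq2]
      positivity
    have hD2 : (0:ℝ) < 2*c2*(q1^2 + 4*q1*q2 + 3*q2^2) := by
      have : (0:ℝ) < q1^2 + 4*q1*q2 + 3*q2^2 := by nlinarith [mul_pos hq1 hq2]
      positivity
    set A : ℝ := -(4 * c1 * q2 * q1 + 4 * c1 * q1 ^ 2 - 1) /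
        (2 * c1 * (q2 ^ 2 + 4 * q1 * q2 + 3 * q1 ^ 2)) with hAdef
    set B : ℝ := -(4 * c2 * q1 * q2 + 4 * c2 * q2 ^ 2 - 1) /
        (2 * c2 * (q1 ^ 2 + 4 * q1 * q2 + 3 * q2 ^ 2)) with hBdef
    have hDa : (0:ℝ) < q2*(3*q1+q2) := by positivity
    have hDb : (0:ℝ) < q1*(q1+3*q2) := by positivity
    have hA : A = q1*(q1-q2) / (q2*(3*q1+q2)) := by
      rw [hAdef, div_eq_div_iff hD1.ne' hDa.ne']
      linear_combination (3*q1+q2)*e1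
    have hB : B = q2*(q2-q1) / (q1*(q1+3*q2)) := by
      rw [hBdef, div_eq_div_iff hD2.ne' hDb.ne']
      linear_combination (q1+3*q2)*e2
    have hfact : (0:ℝ) < (3*q1+q2)*(q1+3*q2) - (q1-q2)^2 := by
      nlinarith [mul_pos hq1 hq2, sq_nonneg (q1+q2)]
    have hP : A * B = -(q1*q2*(q1-q2)^2) / ((q2*(3*q1+q2)) * (q1*(q1+3*q2))) := by
      rw [hA, hB, div_mul_div_comm]
      congr 1
      ring
    have hP1 : A * B ≤ 0 := by
      rw [hP]
      apply div_nonpos_of_nonpos_of_nonneg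
      · nlinarith [sq_nonneg (q1-q2), mul_pos hq1 hq2,
          mul_nonneg (mul_pos hq1 hq2).le (sq_nonneg (q1-q2))]
      · positivity
    have hP2 : (-1:ℝ) < A * B := by
      rw [hP]
      rw [lt_div_iff₀ (by positivity)]
      nlinarith [mul_pos (mul_pos hq1 hq2) hfact]
    have hT : Matrix.trace !![1-K, K*A; B, 0] = (1-K) + 0 := Matrix.trace_fin_two_of _ _ _ _
    have hDet : Matrix.det !![1-K, K*A; B, 0] = (1-K)*0 - (K*A)*B := Matrix.det_fin_two_of _ _ _ _
    rw [hT, hDet]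
    have hint1 : 0 ≤ K * (-(A*B)) := mul_nonneg hK0.le (by linarith)
    have hint2 : 0 ≤ (-(A*B)) * (1-K) := mul_nonneg (by linarith) (by linarith)
    refine ⟨by nlinarith, by nlinarith, by nlinarith⟩
end

section
/- (Model AL) For all c1, c2 > 0 and all K with 0 < K < 1, the system q2 = 2*c1*q1*(q1+q2)^2, q1 = 2*c2*q2*(q1+q2)^2 with q1, q2 > 0 has exactly one solution (q1*,q2*); moreover the Jacobian matrix J = [[1-K, K*R1'(q2*)],[dS2/dq1, dS2/dq2]] evaluated at (q1*,q2*), where S2 as a function of (q1,q2) equals (2*q2+q1)/(2*(1+c2*(q1+q2)^2)) and R1'(q2) = -(4*c1*q2*q1 + 4*c1*q1^2 - 1)/(2*c1*(q2^2 + 4*q1*q2 + 3*q1^2)), satisfies Jury's conditions 1 + tr(J) + det(J) > 0, 1 - tr(J) + det(J) > 0, and 1 - det(J) > 0; i.e., the unique positive equilibrium of Model AL is locally stable for all feasible parameter values. -/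
def JuryStable (J : Matrix (Fin 2) (Fin 2) ℝ) : Prop :=
  1 + J.trace + J.det > 0 ∧ 1 - J.trace + J.det > 0 ∧ 1 - J.det > 0

theorem juryStable_of_adaptive_row {K r s a : ℝ} (hK0 : 0 < K) (hK1 : K ≤ 1)
    (ha0 : 0 ≤ a) (ha1 : a < 1) (hb0 : 0 ≤ -(r * s)) (hb1 : -(r * s) < 1) :
    JuryStable !![1 - K, K * r; s, a] := by
  simp only [JuryStable, Matrix.trace_fin_two_of, Matrix.det_fin_two_of]
  refine ⟨by nlinarith, by nlinarith, by nlinarith⟩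

theorem hasDerivAt_S_right {c : ℝ} (hc : 0 ≤ c) (x y : ℝ) :
    HasDerivAt (fun t ↦ S c x t)
      ((2 * (1 + c * (x + y) ^ 2) - (2 * x + y) * (4 * c * (x + y))) /
        (2 * (1 + c * (x + y) ^ 2)) ^ 2) y := by
  have hden : HasDerivAt (fun t ↦ 2 * (1 + c * (x + t) ^ 2)) (4 * c * (x + y)) y :=
    (((((hasDerivAt_id' y).const_add x).fun_pow 2).const_mul c).const_add 1).const_mul 2
      |>.congr_deriv (by ring)
  exact ((hasDerivAt_id' y).const_add (2 * x)).div hden (by positivity) |>.congr_deriv (by ring)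

theorem hasDerivAt_S_left {c : ℝ} (hc : 0 ≤ c) (x y : ℝ) :
    HasDerivAt (fun t ↦ S c t y)
      ((2 * (2 * (1 + c * (x + y) ^ 2)) - (2 * x + y) * (4 * c * (x + y))) /
        (2 * (1 + c * (x + y) ^ 2)) ^ 2) x := by
  have hden : HasDerivAt (fun t ↦ 2 * (1 + c * (t + y) ^ 2)) (4 * c * (x + y)) x :=
    (((((hasDerivAt_id' x).add_const y).fun_pow 2).const_mul c).const_add 1).const_mul 2
      |>.congr_deriv (by ring)
  exact (((hasDerivAt_id' x).const_mul 2).add_const y).div hden (by positivity)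
    |>.congr_deriv (by ring)

section Equilibrium

variable {c c₁ c₂ x y q₁ q₂ : ℝ}

theorem total_pow_four_of_equilibrium (hq₁ : 0 < q₁)
    (h₁ : q₂ = 2 * c₁ * q₁ * (q₁ + q₂) ^ 2) (h₂ : q₁ = 2 * c₂ * q₂ * (q₁ + q₂) ^ 2) :
    4 * c₁ * c₂ * (q₁ + q₂) ^ 4 = 1 := by
  have : q₁ * (4 * c₁ * c₂ * (q₁ + q₂) ^ 4) = q₁ * 1 := by
    linear_combination -(2 * c₂ * (q₁ + q₂) ^ 2) * h₁ - h₂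
  exact mul_left_cancel₀ hq₁.ne' this

theorem equilibrium_iff_total_pow_four (hq₁ : 0 < q₁) :
    (q₂ = 2 * c₁ * q₁ * (q₁ + q₂) ^ 2 ∧ q₁ = 2 * c₂ * q₂ * (q₁ + q₂) ^ 2) ↔
      (q₂ = 2 * c₁ * q₁ * (q₁ + q₂) ^ 2 ∧ 4 * c₁ * c₂ * (q₁ + q₂) ^ 4 = 1) := by
  refine ⟨fun ⟨h₁, h₂⟩ ↦ ⟨h₁, total_pow_four_of_equilibrium hq₁ h₁ h₂⟩, fun ⟨h₁, h₄⟩ ↦ ⟨h₁, ?_⟩⟩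
  linear_combination (-q₁) * h₄ - 2 * c₂ * (q₁ + q₂) ^ 2 * h₁

theorem existsUnique_equilibrium (hc₁ : 0 < c₁) (hc₂ : 0 < c₂) :
    ∃! p : ℝ × ℝ, 0 < p.1 ∧ 0 < p.2 ∧
      p.2 = 2 * c₁ * p.1 * (p.1 + p.2) ^ 2 ∧ p.1 = 2 * c₂ * p.2 * (p.1 + p.2) ^ 2 := by
  set σ : ℝ := (1 / (4 * c₁ * c₂)) ^ ((4 : ℕ)⁻¹ : ℝ)
  have hσ : 0 < σ := by positivity
  have hσ₄ : 4 * c₁ * c₂ * σ ^ 4 = 1 := by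
    rw [Real.rpow_inv_natCast_pow (by positivity) (by norm_num)]
    field_simp
  have hden : 0 < 1 + 2 * c₁ * σ ^ 2 := by positivity
  set x := σ / (1 + 2 * c₁ * σ ^ 2)
  have hx : 0 < x := by positivity
  have hsum : x + 2 * c₁ * x * σ ^ 2 = σ := by
    simp only [x]; field_simp
  refine ⟨(x, 2 * c₁ * x * σ ^ 2), ⟨hx, by positivity, (equilibrium_iff_total_pow_four hx).2 ?_⟩, ?_⟩
  · dsimp only
    rw [hsum]
    exact ⟨rfl, hσ₄⟩
  · rintro ⟨p₁, p₂⟩ ⟨hp₁, hp₂, hp⟩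
    obtain ⟨h₁, h₄⟩ := (equilibrium_iff_total_pow_four hp₁).1 hp
    have htotal : p₁ + p₂ = σ := by
      refine (pow_left_inj₀ (by positivity) hσ.le (n := 4) (by norm_num)).1 ?_
      have : 4 * c₁ * c₂ * (p₁ + p₂) ^ 4 = 4 * c₁ * c₂ * σ ^ 4 := h₄.trans hσ₄.symm
      exact mul_left_cancel₀ (by positivity) this
    rw [htotal] at h₁
    have hp₁x : p₁ = x := by
      simp only [x]; rw [eq_div_iff hden.ne']; linarith
    exact Prod.ext hp₁x (hp₁x ▸ h₁)

-- Both equilibrium equations read `y = 2 c x (x + y) ^ 2` with `x` the firm's own output.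
theorem cost_eq_of_equilibrium (hx : 0 < x) (hy : 0 < y) (h : y = 2 * c * x * (x + y) ^ 2) :
    c = y / (2 * x * (x + y) ^ 2) := by
  field_simp
  linarith

theorem reactionSlope_of_equilibrium (hx : 0 < x) (hy : 0 < y)
    (h : y = 2 * c * x * (x + y) ^ 2) :
    -(4 * c * y * x + 4 * c * x ^ 2 - 1) / (2 * c * (y ^ 2 + 4 * x * y + 3 * x ^ 2)) =
      x * (x - y) / (y * (y + 3 * x)) := by
  rw [cost_eq_of_equilibrium hx hy h]
  field_simp
  ring

theorem deriv_S_right_of_equilibrium (hx : 0 < x) (hy : 0 < y)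
    (h : y = 2 * c * x * (x + y) ^ 2) :
    deriv (fun t ↦ S c x t) y = x * (x - y) / ((x + y) * (2 * x + y)) := by
  have hc := cost_eq_of_equilibrium hx hy h
  rw [(hasDerivAt_S_right (hc ▸ by positivity) x y).deriv, hc]
  field_simp
  ring

theorem deriv_S_left_of_equilibrium (hx : 0 < x) (hy : 0 < y)
    (h : y = 2 * c * x * (x + y) ^ 2) :
    deriv (fun t ↦ S c t y) x = 2 * x ^ 2 / ((x + y) * (2 * x + y)) := by
  have hc := cost_eq_of_equilibrium hx hy h
  rw [(hasDerivAt_S_left (hc ▸ by positivity) x y).deriv, hc]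
  field_simp
  ring

theorem juryStable_modelAL_jacobian {K : ℝ} (hK0 : 0 < K) (hK1 : K < 1)
    (hq₁ : 0 < q₁) (hq₂ : 0 < q₂)
    (h₁ : q₂ = 2 * c₁ * q₁ * (q₁ + q₂) ^ 2) (h₂ : q₁ = 2 * c₂ * q₂ * (q₁ + q₂) ^ 2) :
    JuryStable !![1 - K, K * (-(4 * c₁ * q₂ * q₁ + 4 * c₁ * q₁ ^ 2 - 1) /
                 (2 * c₁ * (q₂ ^ 2 + 4 * q₁ * q₂ + 3 * q₁ ^ 2)));
               deriv (fun y ↦ S c₂ q₂ y) q₁, deriv (fun x ↦ S c₂ x q₁) q₂] := by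
  have h₂' : q₁ = 2 * c₂ * q₂ * (q₂ + q₁) ^ 2 := add_comm q₁ q₂ ▸ h₂
  rw [reactionSlope_of_equilibrium hq₁ hq₂ h₁, deriv_S_right_of_equilibrium hq₂ hq₁ h₂',
    deriv_S_left_of_equilibrium hq₂ hq₁ h₂']
  have hb : -(q₁ * (q₁ - q₂) / (q₂ * (q₂ + 3 * q₁)) *
      (q₂ * (q₂ - q₁) / ((q₂ + q₁) * (2 * q₂ + q₁)))) =
        q₁ * (q₁ - q₂) ^ 2 / ((q₂ + 3 * q₁) * (q₂ + q₁) * (2 * q₂ + q₁)) := by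
    field_simp
    ring
  apply juryStable_of_adaptive_row hK0 hK1.le (by positivity)
  · rw [div_lt_one (by positivity)]
    nlinarith [mul_pos hq₁ hq₂]
  · rw [hb]
    positivity
  · rw [hb, div_lt_one (by positivity)]
    nlinarith [pow_pos hq₁ 3, mul_pos (mul_pos hq₁ hq₁) hq₂, mul_pos (mul_pos hq₁ hq₂) hq₂,
      pow_pos hq₂ 3]

end Equilibrium

/-- Model AL: for any adjustment speed `K ∈ (0,1)`, the equilibrium system has
exactly one positive solution, and at that solution the Jacobian matrix
`[[1-K, K*R1'],[dS2/dq1, dS2/dq2]]` satisfies Jury's stability conditions. -/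
theorem modelAL_unique_stable (c1 c2 K : ℝ) (hc1 : 0 < c1) (hc2 : 0 < c2)
    (hK0 : 0 < K) (hK1 : K < 1) :
    (∃! p : ℝ × ℝ, 0 < p.1 ∧ 0 < p.2 ∧
      p.2 = 2 * c1 * p.1 * (p.1 + p.2) ^ 2 ∧
      p.1 = 2 * c2 * p.2 * (p.1 + p.2) ^ 2) ∧
    (∀ q1 q2 : ℝ, 0 < q1 → 0 < q2 →
      q2 = 2 * c1 * q1 * (q1 + q2) ^ 2 → q1 = 2 * c2 * q2 * (q1 + q2) ^ 2 →
      ∀ J : Matrix (Fin 2) (Fin 2) ℝ,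
        J = !![1 - K, K * (-(4 * c1 * q2 * q1 + 4 * c1 * q1 ^ 2 - 1) /
                 (2 * c1 * (q2 ^ 2 + 4 * q1 * q2 + 3 * q1 ^ 2)));
               deriv (fun y => S c2 q2 y) q1, deriv (fun x => S c2 x q1) q2] →
        1 + Matrix.trace J + Matrix.det J > 0 ∧
        1 - Matrix.trace J + Matrix.det J > 0 ∧
        1 - Matrix.det J > 0) := by
  refine ⟨existsUnique_equilibrium hc1 hc2, ?_⟩
  rintro q1 q2 hq1 hq2 h1 h2 J rfl
  exact juryStable_modelAL_jacobian hK0 hK1 hq1 hq2 h1 h2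
end

section
/- (Model AA) For all c1, c2 > 0 and all K1, K2 with 0 < K1 < 1 and 0 < K2 < 1, the system q2 = 2*c1*q1*(q1+q2)^2, q1 = 2*c2*q2*(q1+q2)^2 with q1, q2 > 0 has exactly one solution (q1*,q2*); moreover the Jacobian matrix J = [[1-K1, K1*R1'(q2*)],[K2*R2'(q1*), 1-K2]] satisfies Jury's conditions 1 + tr(J) + det(J) > 0, 1 - tr(J) + det(J) > 0, and 1 - det(J) > 0, where R_i'(y) = -(4*c_i*y*x + 4*c_i*x^2 - 1)/(2*c_i*(y^2 + 4*x*y + 3*x^2)) with x = R_i(y); i.e., the unique positive equilibrium of Model AA is locally stable for all feasible parameter values. -/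
set_option maxHeartbeats 2000000 in
/-- Model AA: for any adjustment speeds `K1, K2 ∈ (0,1)`, the equilibrium
system has exactly one positive solution, and at that solution the Jacobian
matrix `[[1-K1, K1*R1'],[K2*R2', 1-K2]]` satisfies Jury's stability
conditions. -/
theorem modelAA_unique_stable (c1 c2 K1 K2 : ℝ) (hc1 : 0 < c1) (hc2 : 0 < c2)
    (hK10 : 0 < K1) (hK11 : K1 < 1) (hK20 : 0 < K2) (hK21 : K2 < 1) :
    (∃! p : ℝ × ℝ, 0 < p.1 ∧ 0 < p.2 ∧
      p.2 = 2 * c1 * p.1 * (p.1 + p.2) ^ 2 ∧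
      p.1 = 2 * c2 * p.2 * (p.1 + p.2) ^ 2) ∧
    (∀ q1 q2 : ℝ, 0 < q1 → 0 < q2 →
      q2 = 2 * c1 * q1 * (q1 + q2) ^ 2 → q1 = 2 * c2 * q2 * (q1 + q2) ^ 2 →
      ∀ J : Matrix (Fin 2) (Fin 2) ℝ,
        J = !![1 - K1, K1 * (-(4 * c1 * q2 * q1 + 4 * c1 * q1 ^ 2 - 1) /
                 (2 * c1 * (q2 ^ 2 + 4 * q1 * q2 + 3 * q1 ^ 2)));
               K2 * (-(4 * c2 * q1 * q2 + 4 * c2 * q2 ^ 2 - 1) /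
                 (2 * c2 * (q1 ^ 2 + 4 * q1 * q2 + 3 * q2 ^ 2))), 1 - K2] →
        1 + Matrix.trace J + Matrix.det J > 0 ∧
        1 - Matrix.trace J + Matrix.det J > 0 ∧
        1 - Matrix.det J > 0) := by
  constructor
  · -- unique positive equilibrium
    set t : ℝ := Real.sqrt (1 / (4 * c1 * c2)) with ht
    have ht0 : 0 < t := Real.sqrt_pos.2 (by positivity)
    have ht2 : t ^ 2 = 1 / (4 * c1 * c2) := Real.sq_sqrt (by positivity)
    have h41 : 4 * c1 * c2 * t ^ 2 = 1 := by rw [ht2]; field_simp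
    set s : ℝ := Real.sqrt t with hs
    have hs0 : 0 < s := Real.sqrt_pos.2 ht0
    have hs2 : s ^ 2 = t := Real.sq_sqrt ht0.le
    have hden : 0 < 1 + 2 * c1 * t := by positivity
    have hdne : (1 + 2 * c1 * t) ≠ 0 := ne_of_gt hden
    refine ⟨(s / (1 + 2 * c1 * t), 2 * c1 * t * s / (1 + 2 * c1 * t)), ⟨?_, ?_, ?_, ?_⟩, ?_⟩
    · positivity
    · positivity
    · show 2 * c1 * t * s / (1 + 2 * c1 * t) =
        2 * c1 * (s / (1 + 2 * c1 * t)) *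
          (s / (1 + 2 * c1 * t) + 2 * c1 * t * s / (1 + 2 * c1 * t)) ^ 2
      have hsum : s / (1 + 2 * c1 * t) + 2 * c1 * t * s / (1 + 2 * c1 * t) = s := by
        field_simp
      rw [hsum, hs2]; field_simp
    · show s / (1 + 2 * c1 * t) =
        2 * c2 * (2 * c1 * t * s / (1 + 2 * c1 * t)) *
          (s / (1 + 2 * c1 * t) + 2 * c1 * t * s / (1 + 2 * c1 * t)) ^ 2
      have hsum : s / (1 + 2 * c1 * t) + 2 * c1 * t * s / (1 + 2 * c1 * t) = s := by
        field_simp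
      rw [hsum, hs2]
      rw [div_eq_iff hdne, mul_comm]
      field_simp
      linear_combination -h41
    · rintro ⟨x, y⟩ ⟨hx0, hy0, he1, he2⟩
      simp only at he1 he2 hx0 hy0 ⊢
      -- derive 4 c1 c2 (x+y)^4 = 1
      have h1 : x - 4 * c1 * c2 * x * (x + y) ^ 4 = 0 := by
        linear_combination he2 + 2 * c2 * (x + y) ^ 2 * he1
      have h2 : 4 * c1 * c2 * (x + y) ^ 4 = 1 := by
        have hx : x ≠ 0 := ne_of_gt hx0
        have hfac : x * (4 * c1 * c2 * (x + y) ^ 4 - 1) = 0 := by linear_combination -h1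
        rcases mul_eq_zero.1 hfac with h | h
        · exact absurd h hx
        · linarith
      have h4c : (4 * c1 * c2) ≠ 0 := by positivity
      have h4 : (x + y) ^ 4 = t ^ 2 := by
        apply mul_left_cancel₀ h4c
        exact h2.trans h41.symm
      have h5 : (x + y) ^ 2 = t := by
        have hfac : ((x + y) ^ 2 - t) * ((x + y) ^ 2 + t) = 0 := by linear_combination h4
        rcases mul_eq_zero.1 hfac with h | h
        · linarith
        · nlinarith [sq_nonneg (x + y)]
      have h6 : x + y = s := by
        have hfac : (x + y - s) * (x + y + s) = 0 := by linear_combination h5 - hs2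
        rcases mul_eq_zero.1 hfac with h | h
        · linarith
        · nlinarith
      rw [h5] at he1
      have hx : x = s / (1 + 2 * c1 * t) := by
        rw [eq_div_iff hdne]
        linear_combination h6 - he1
      have hy : y = 2 * c1 * t * s / (1 + 2 * c1 * t) := by
        rw [he1, hx]; ring
      exact Prod.ext hx hy
  · -- stability
    intro q1 q2 hq1 hq2 he1 he2 J hJ
    subst hJ
    rw [Matrix.trace_fin_two_of, Matrix.det_fin_two_of]
    have hq1' : q1 ≠ 0 := ne_of_gt hq1
    have hq2' : q2 ≠ 0 := ne_of_gt hq2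
    have hs' : q1 + q2 ≠ 0 := by positivity
    have hc1e : c1 = q2 / (2 * q1 * (q1 + q2) ^ 2) := by
      rw [eq_div_iff (by positivity)]
      linear_combination -he1
    have hc2e : c2 = q1 / (2 * q2 * (q1 + q2) ^ 2) := by
      rw [eq_div_iff (by positivity)]
      linear_combination -he2
    have hd1 : (3 * q1 + q2) ≠ 0 := by positivity
    have hd2 : (q1 + 3 * q2) ≠ 0 := by positivity
    have hA : -(4 * c1 * q2 * q1 + 4 * c1 * q1 ^ 2 - 1) /
        (2 * c1 * (q2 ^ 2 + 4 * q1 * q2 + 3 * q1 ^ 2)) =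
        q1 * (q1 - q2) / (q2 * (3 * q1 + q2)) := by
      rw [div_eq_div_iff (by positivity) (by positivity)]
      linear_combination (3 * q1 + q2) * he1
    have hB : -(4 * c2 * q1 * q2 + 4 * c2 * q2 ^ 2 - 1) /
        (2 * c2 * (q1 ^ 2 + 4 * q1 * q2 + 3 * q2 ^ 2)) =
        q2 * (q2 - q1) / (q1 * (q1 + 3 * q2)) := by
      rw [div_eq_div_iff (by positivity) (by positivity)]
      linear_combination (q1 + 3 * q2) * he2
    rw [hA, hB]
    set A : ℝ := q1 * (q1 - q2) / (q2 * (3 * q1 + q2)) with hA2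
    set B : ℝ := q2 * (q2 - q1) / (q1 * (q1 + 3 * q2)) with hB2
    have hab : A * B = -(q1 - q2) ^ 2 / ((3 * q1 + q2) * (q1 + 3 * q2)) := by
      rw [hA2, hB2, div_mul_div_comm,
        div_eq_div_iff (by positivity) (by positivity)]
      ring
    have hDpos : 0 < (3 * q1 + q2) * (q1 + 3 * q2) := by positivity
    have hab0 : A * B ≤ 0 := by
      rw [hab]
      apply div_nonpos_of_nonpos_of_nonneg
      · nlinarith [sq_nonneg (q1 - q2)]
      · positivity
    have hab1 : -1 < A * B := by
      have hlt : (q1 - q2) ^ 2 < (3 * q1 + q2) * (q1 + 3 * q2) := by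
        nlinarith [mul_pos hq1 hq2]
      rw [hab, neg_div]
      linarith [(div_lt_one hDpos).2 hlt]
    refine ⟨?_, ?_, ?_⟩
    · have hP : K1 * K2 * (A * B) ≤ 0 :=
        mul_nonpos_of_nonneg_of_nonpos (by positivity) hab0
      nlinarith [hP, mul_pos (by linarith : (0:ℝ) < 2 - K1) (by linarith : (0:ℝ) < 2 - K2)]
    · have h : 0 < K1 * K2 * (1 - A * B) :=
        mul_pos (mul_pos hK10 hK20) (by linarith)
      nlinarith [h]
    · have h1 : 0 < K1 * (1 - K2) := mul_pos hK10 (by linarith)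
      have h2 : 0 < K2 * (1 - K1) := mul_pos hK20 (by linarith)
      have h3 : 0 < K1 * K2 * (1 + A * B) :=
        mul_pos (mul_pos hK10 hK20) (by linarith)
      nlinarith [h1, h2, h3]
end

section
/- (Model AR with linear costs) For all c1, c2 > 0 and all K with 0 < K < 1, the system q1 = sqrt(q2/c1) - q2, q2 = sqrt(q1/c2) - q1 with q1, q2 > 0 has exactly one solution, namely q1* = c2/(c1+c2)^2, q2* = c1/(c1+c2)^2; moreover, if c1^2*K + 2*c1*c2*K + c2^2*K - 8*c1*c2 < 0, then |(1-K) + K * R1'(q2*) * R2'(q1*)| < 1 with R_i'(y) = 1/(2*sqrt(c_i*y)) - 1, i.e., the unique positive equilibrium of the one-dimensional system q1(t+1) = (1-K)*q1(t) + K*R1(R2(q1(t))) is locally stable. -/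
/-- Model AR with linear costs: for any adjustment speed `K ∈ (0,1)`, the
equilibrium system has exactly one positive solution `q1* = c2/(c1+c2)^2`,
`q2* = c1/(c1+c2)^2`; and if `c1^2*K + 2*c1*c2*K + c2^2*K - 8*c1*c2 < 0` then
`|(1-K) + K * R1'(q2*) * R2'(q1*)| < 1`, so the unique positive equilibrium of
the one-dimensional map `q1 ↦ (1-K)*q1 + K*R1(R2(q1))` is locally stable. -/
theorem modelAR_linear (c1 c2 K : ℝ) (hc1 : 0 < c1) (hc2 : 0 < c2)
    (hK0 : 0 < K) (hK1 : K < 1) :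
    (∀ q1 q2 : ℝ,
      (0 < q1 ∧ 0 < q2 ∧ q1 = Real.sqrt (q2 / c1) - q2 ∧
        q2 = Real.sqrt (q1 / c2) - q1) ↔
      (q1 = c2 / (c1 + c2) ^ 2 ∧ q2 = c1 / (c1 + c2) ^ 2)) ∧
    (c1 ^ 2 * K + 2 * c1 * c2 * K + c2 ^ 2 * K - 8 * c1 * c2 < 0 →
      |(1 - K) + K * (1 / (2 * Real.sqrt (c1 * (c1 / (c1 + c2) ^ 2))) - 1) *
        (1 / (2 * Real.sqrt (c2 * (c2 / (c1 + c2) ^ 2))) - 1)| < 1) := by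
  have hs : (0:ℝ) < c1 + c2 := by linarith
  constructor
  · intro q1 q2
    constructor
    · rintro ⟨h1, h2, e1, e2⟩
      have hsum : 0 < q1 + q2 := by linarith
      have s1 : Real.sqrt (q2 / c1) = q1 + q2 := by linarith
      have s2 : Real.sqrt (q1 / c2) = q1 + q2 := by linarith
      have sq1 : q2 / c1 = (q1 + q2) ^ 2 := by
        rw [← s1, Real.sq_sqrt (by positivity)]
      have sq2 : q1 / c2 = (q1 + q2) ^ 2 := by
        rw [← s2, Real.sq_sqrt (by positivity)]
      have hq2 : q2 = c1 * (q1 + q2) ^ 2 := by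
        field_simp at sq1; linarith
      have hq1 : q1 = c2 * (q1 + q2) ^ 2 := by
        field_simp at sq2; linarith
      have hsumeq : q1 + q2 = 1 / (c1 + c2) := by
        have : q1 + q2 = (c1 + c2) * (q1 + q2) ^ 2 := by linarith [hq1, hq2]
        field_simp
        nlinarith [this, hsum]
      constructor
      · rw [hq1, hsumeq]; field_simp
      · rw [hq2, hsumeq]; field_simp
    · rintro ⟨rfl, rfl⟩
      have h1 : (0:ℝ) < c2 / (c1 + c2) ^ 2 := by positivity
      have h2 : (0:ℝ) < c1 / (c1 + c2) ^ 2 := by positivity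
      have key : ∀ a : ℝ, 0 < a → Real.sqrt (a / (c1 + c2) ^ 2 / a) = 1 / (c1 + c2) := by
        intro a ha
        have : a / (c1 + c2) ^ 2 / a = (1 / (c1 + c2)) ^ 2 := by
          field_simp
        rw [this, Real.sqrt_sq (by positivity)]
      refine ⟨h1, h2, ?_, ?_⟩
      · rw [key c1 hc1]; field_simp; ring
      · rw [key c2 hc2]; field_simp; ring
  · intro hcond
    have e1 : c1 * (c1 / (c1 + c2) ^ 2) = (c1 / (c1 + c2)) ^ 2 := by
      field_simp
    have e2 : c2 * (c2 / (c1 + c2) ^ 2) = (c2 / (c1 + c2)) ^ 2 := by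
      field_simp
    rw [e1, e2, Real.sqrt_sq (by positivity), Real.sqrt_sq (by positivity)]
    have expr_eq : (1 - K) + K * (1 / (2 * (c1 / (c1 + c2))) - 1) *
        (1 / (2 * (c2 / (c1 + c2))) - 1) = 1 - K * (c1 + c2) ^ 2 / (4 * c1 * c2) := by
      field_simp
      ring
    rw [expr_eq, abs_lt]
    constructor
    · have hden : 0 < 4 * c1 * c2 := by positivity
      have : K * (c1 + c2) ^ 2 / (4 * c1 * c2) < 2 := by
        rw [div_lt_iff₀ hden]
        nlinarith
      linarith
    · have : 0 < K * (c1 + c2) ^ 2 / (4 * c1 * c2) := by positivity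
      linarith
end

section
/- (Model AB with linear costs) For all c1, c2 > 0 and all K with 0 < K < 1, the system q1 = sqrt(q2/c1) - q2, q2 = sqrt(q1/c2) - q1 with q1, q2 > 0 has exactly one solution, namely q1* = c2/(c1+c2)^2, q2* = c1/(c1+c2)^2; moreover, if c1^2*K - 2*c1*c2*K + c2^2*K - 4*c1*c2 < 0, then the Jacobian matrix J = [[1-K, K*R1'(q2*)],[R2'(q1*), 0]] with R_i'(y) = 1/(2*sqrt(c_i*y)) - 1 satisfies Jury's conditions 1 + tr(J) + det(J) > 0, 1 - tr(J) + det(J) > 0, and 1 - det(J) > 0, so the equilibrium is locally stable. -/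
/-- Model AB with linear costs: for any adjustment speed `K ∈ (0,1)`, the
equilibrium system has exactly one positive solution `q1* = c2/(c1+c2)^2`,
`q2* = c1/(c1+c2)^2`; and if `c1^2*K - 2*c1*c2*K + c2^2*K - 4*c1*c2 < 0` then
the Jacobian `[[1-K, K*R1'(q2*)],[R2'(q1*), 0]]` satisfies Jury's conditions,
so the equilibrium is locally stable. -/
theorem modelAB_linear (c1 c2 K : ℝ) (hc1 : 0 < c1) (hc2 : 0 < c2)
    (hK0 : 0 < K) (hK1 : K < 1) :
    (∀ q1 q2 : ℝ,
      (0 < q1 ∧ 0 < q2 ∧ q1 = Real.sqrt (q2 / c1) - q2 ∧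
        q2 = Real.sqrt (q1 / c2) - q1) ↔
      (q1 = c2 / (c1 + c2) ^ 2 ∧ q2 = c1 / (c1 + c2) ^ 2)) ∧
    (c1 ^ 2 * K - 2 * c1 * c2 * K + c2 ^ 2 * K - 4 * c1 * c2 < 0 →
      ∀ J : Matrix (Fin 2) (Fin 2) ℝ,
        J = !![1 - K, K * (1 / (2 * Real.sqrt (c1 * (c1 / (c1 + c2) ^ 2))) - 1);
               1 / (2 * Real.sqrt (c2 * (c2 / (c1 + c2) ^ 2))) - 1, 0] →
        1 + Matrix.trace J + Matrix.det J > 0 ∧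
        1 - Matrix.trace J + Matrix.det J > 0 ∧
        1 - Matrix.det J > 0) := by
  have hcc : 0 < c1 + c2 := by linarith
  constructor
  · intro q1 q2
    constructor
    · rintro ⟨h1, h2, e1, e2⟩
      have hs : 0 < q1 + q2 := by linarith
      have hsq1 : q1 + q2 = Real.sqrt (q2 / c1) := by rw [e1]; ring
      have hsq2 : q1 + q2 = Real.sqrt (q1 / c2) := by rw [e2]; ring
      have h2' : (q1 + q2) ^ 2 = q2 / c1 := by
        rw [hsq1, Real.sq_sqrt (by positivity)]
      have h1' : (q1 + q2) ^ 2 = q1 / c2 := by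
        rw [hsq2, Real.sq_sqrt (by positivity)]
      have hq2 : q2 = c1 * (q1 + q2) ^ 2 := by
        field_simp at h2'; linarith
      have hq1 : q1 = c2 * (q1 + q2) ^ 2 := by
        field_simp at h1'; linarith
      have hsum : q1 + q2 = (c1 + c2) * (q1 + q2) ^ 2 := by
        nlinarith [hq1, hq2]
      have hseq : q1 + q2 = 1 / (c1 + c2) := by
        have h := mul_right_cancel₀ hs.ne' (by nlinarith : ((c1 + c2) * (q1 + q2)) * (q1 + q2) = 1 * (q1 + q2))
        field_simp
        linarith
      constructor
      · rw [hq1, hseq]; field_simp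
      · rw [hq2, hseq]; field_simp
    · rintro ⟨rfl, rfl⟩
      have hsq1 : Real.sqrt (c1 / (c1 + c2) ^ 2 / c1) = 1 / (c1 + c2) := by
        rw [show c1 / (c1 + c2) ^ 2 / c1 = (1 / (c1 + c2)) ^ 2 by field_simp,
          Real.sqrt_sq (by positivity)]
      have hsq2 : Real.sqrt (c2 / (c1 + c2) ^ 2 / c2) = 1 / (c1 + c2) := by
        rw [show c2 / (c1 + c2) ^ 2 / c2 = (1 / (c1 + c2)) ^ 2 by field_simp,
          Real.sqrt_sq (by positivity)]
      refine ⟨by positivity, by positivity, ?_, ?_⟩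
      · rw [hsq1]; field_simp; ring
      · rw [hsq2]; field_simp; ring
  · intro hcond J hJ
    have hs1 : Real.sqrt (c1 * (c1 / (c1 + c2) ^ 2)) = c1 / (c1 + c2) := by
      rw [show c1 * (c1 / (c1 + c2) ^ 2) = (c1 / (c1 + c2)) ^ 2 by field_simp,
        Real.sqrt_sq (by positivity)]
    have hs2 : Real.sqrt (c2 * (c2 / (c1 + c2) ^ 2)) = c2 / (c1 + c2) := by
      rw [show c2 * (c2 / (c1 + c2) ^ 2) = (c2 / (c1 + c2)) ^ 2 by field_simp,
        Real.sqrt_sq (by positivity)]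
    have htr : Matrix.trace J = 1 - K := by
      rw [hJ, Matrix.trace_fin_two_of]; ring
    have hdet : Matrix.det J = K * (c1 - c2) ^ 2 / (4 * c1 * c2) := by
      rw [hJ, Matrix.det_fin_two_of, hs1, hs2]
      field_simp
      ring
    rw [htr, hdet]
    refine ⟨?_, ?_, ?_⟩
    · have : 0 ≤ K * (c1 - c2) ^ 2 / (4 * c1 * c2) := by positivity
      linarith
    · have : 0 ≤ K * (c1 - c2) ^ 2 / (4 * c1 * c2) := by positivity
      linarith
    · rw [gt_iff_lt, sub_pos, div_lt_one (by positivity)]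
      nlinarith
end

section
/- (Model AA with linear costs; Agliari) For all c1, c2 > 0 and all K1, K2 with 0 < K1 < 1 and 0 < K2 < 1, the system q1 = sqrt(q2/c1) - q2, q2 = sqrt(q1/c2) - q1 with q1, q2 > 0 has exactly one solution, namely q1* = c2/(c1+c2)^2, q2* = c1/(c1+c2)^2; moreover, if c1^2*K1*K2 + 2*c1*c2*K1*K2 + c2^2*K1*K2 - 4*c1*c2*K1 - 4*c1*c2*K2 < 0, then the Jacobian matrix J = [[1-K1, K1*R1'(q2*)],[K2*R2'(q1*), 1-K2]] with R_i'(y) = 1/(2*sqrt(c_i*y)) - 1 satisfies Jury's conditions 1 + tr(J) + det(J) > 0, 1 - tr(J) + det(J) > 0, and 1 - det(J) > 0, so the equilibrium is locally stable. -/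
/-- Model AA with linear costs (Agliari): for any adjustment speeds
`K1, K2 ∈ (0,1)`, the equilibrium system has exactly one positive solution
`q1* = c2/(c1+c2)^2`, `q2* = c1/(c1+c2)^2`; and if
`c1^2*K1*K2 + 2*c1*c2*K1*K2 + c2^2*K1*K2 - 4*c1*c2*K1 - 4*c1*c2*K2 < 0` then
the Jacobian `[[1-K1, K1*R1'(q2*)],[K2*R2'(q1*), 1-K2]]` satisfies Jury's
conditions, so the equilibrium is locally stable. -/
theorem modelAA_linear (c1 c2 K1 K2 : ℝ) (hc1 : 0 < c1) (hc2 : 0 < c2)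
    (hK10 : 0 < K1) (hK11 : K1 < 1) (hK20 : 0 < K2) (hK21 : K2 < 1) :
    (∀ q1 q2 : ℝ,
      (0 < q1 ∧ 0 < q2 ∧ q1 = Real.sqrt (q2 / c1) - q2 ∧
        q2 = Real.sqrt (q1 / c2) - q1) ↔
      (q1 = c2 / (c1 + c2) ^ 2 ∧ q2 = c1 / (c1 + c2) ^ 2)) ∧
    (c1 ^ 2 * K1 * K2 + 2 * c1 * c2 * K1 * K2 + c2 ^ 2 * K1 * K2
        - 4 * c1 * c2 * K1 - 4 * c1 * c2 * K2 < 0 →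
      ∀ J : Matrix (Fin 2) (Fin 2) ℝ,
        J = !![1 - K1, K1 * (1 / (2 * Real.sqrt (c1 * (c1 / (c1 + c2) ^ 2))) - 1);
               K2 * (1 / (2 * Real.sqrt (c2 * (c2 / (c1 + c2) ^ 2))) - 1), 1 - K2] →
        1 + Matrix.trace J + Matrix.det J > 0 ∧
        1 - Matrix.trace J + Matrix.det J > 0 ∧
        1 - Matrix.det J > 0) := by
  have hs : 0 < c1 + c2 := by linarith
  have hs2 : (0:ℝ) < (c1 + c2) ^ 2 := by positivity
  constructor
  · intro q1 q2
    constructor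
    · rintro ⟨h1, h2, e1, e2⟩
      have hsum : 0 < q1 + q2 := by linarith
      have hq2 : q2 = c1 * (q1 + q2) ^ 2 := by
        have : q1 + q2 = Real.sqrt (q2 / c1) := by linarith
        have h := Real.sq_sqrt (by positivity : (0:ℝ) ≤ q2 / c1)
        rw [← this] at h
        field_simp at h ⊢
        linarith [h]
      have hq1 : q1 = c2 * (q1 + q2) ^ 2 := by
        have : q1 + q2 = Real.sqrt (q1 / c2) := by linarith
        have h := Real.sq_sqrt (by positivity : (0:ℝ) ≤ q1 / c2)
        rw [← this] at h
        field_simp at h ⊢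
        linarith [h]
      have hS : q1 + q2 = 1 / (c1 + c2) := by
        have hsum2 : q1 + q2 = (c1 + c2) * (q1 + q2) ^ 2 := by nlinarith
        field_simp
        nlinarith
      constructor
      · rw [hq1, hS]; field_simp
      · rw [hq2, hS]; field_simp
    · rintro ⟨e1, e2⟩
      have hq1 : 0 < q1 := by rw [e1]; positivity
      have hq2 : 0 < q2 := by rw [e2]; positivity
      have s1 : Real.sqrt (q2 / c1) = 1 / (c1 + c2) := by
        rw [e2]
        have : c1 / (c1 + c2) ^ 2 / c1 = (1 / (c1 + c2)) ^ 2 := by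
          field_simp
        rw [this, Real.sqrt_sq (by positivity)]
      have s2 : Real.sqrt (q1 / c2) = 1 / (c1 + c2) := by
        rw [e1]
        have : c2 / (c1 + c2) ^ 2 / c2 = (1 / (c1 + c2)) ^ 2 := by
          field_simp
        rw [this, Real.sqrt_sq (by positivity)]
      refine ⟨hq1, hq2, ?_, ?_⟩
      · rw [s1, e1, e2]; field_simp; ring
      · rw [s2, e1, e2]; field_simp; ring
  · intro hcond J hJ
    have r1 : Real.sqrt (c1 * (c1 / (c1 + c2) ^ 2)) = c1 / (c1 + c2) := by
      have : c1 * (c1 / (c1 + c2) ^ 2) = (c1 / (c1 + c2)) ^ 2 := by field_simp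
      rw [this, Real.sqrt_sq (by positivity)]
    have r2 : Real.sqrt (c2 * (c2 / (c1 + c2) ^ 2)) = c2 / (c1 + c2) := by
      have : c2 * (c2 / (c1 + c2) ^ 2) = (c2 / (c1 + c2)) ^ 2 := by field_simp
      rw [this, Real.sqrt_sq (by positivity)]
    subst hJ
    rw [Matrix.trace_fin_two_of, Matrix.det_fin_two_of, r1, r2]
    have e1 : 1 / (2 * (c1 / (c1 + c2))) - 1 = (c2 - c1) / (2 * c1) := by
      field_simp; ring
    have e2 : 1 / (2 * (c2 / (c1 + c2))) - 1 = (c1 - c2) / (2 * c2) := by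
      field_simp; ring
    rw [e1, e2]
    have key : K1 * ((c2 - c1) / (2 * c1)) * (K2 * ((c1 - c2) / (2 * c2)))
        = -(K1 * K2 * (c1 - c2) ^ 2 / (4 * c1 * c2)) := by
      field_simp; ring
    rw [key]
    have hpos : 0 ≤ K1 * K2 * (c1 - c2) ^ 2 / (4 * c1 * c2) := by positivity
    have hc12 : 0 < 4 * c1 * c2 := by positivity
    refine ⟨?_, ?_, ?_⟩
    · nlinarith
    · nlinarith
    · have hlt : K1 * K2 * (c1 - c2) ^ 2 / (4 * c1 * c2) < K1 + K2 - K1 * K2 := by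
        rw [div_lt_iff₀ hc12]
        nlinarith [hcond]
      nlinarith [hlt]
end
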